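/- arXiv:2002.08693 — 6 statements merged into one kernel-verified Lean document; each statement's English description precedes it below -/
import Mathlib

section
/- Let A₁,…,A_{d+1} be convex sets in ℝ^d with empty common intersection, such that every d of them have nonempty common intersection. Then for every hyperplane H' in ℝ^d, there exists an index j such that B_j := ⋂_{k≠j} A_k does not intersect H'. -/
/-! If every `B j` met the hyperplane `H'`, then any `d` of the sets `A i ∩ H'` would have a common
point, namely a point of `B j ∩ H'` for an index `j` outside the chosen `d`. Helly's theorem in the
`(d - 1)`-dimensional `H'` would then give a point common to all the `A i`. -/

open Finset Module

namespace Convex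

variable {ι 𝕜 E : Type*} [Field 𝕜] [LinearOrder 𝕜] [IsStrictOrderedRing 𝕜]
  [AddCommGroup E] [Module 𝕜 E] {F : ι → Set E} {s : Finset ι}

theorem helly_theorem_affineSubspace (P : AffineSubspace 𝕜 E) [FiniteDimensional 𝕜 P.direction]
    (h_convex : ∀ i ∈ s, Convex 𝕜 (F i))
    (h_inter : ∀ I ⊆ s, #I ≤ finrank 𝕜 P.direction + 1 → ((P : Set E) ∩ ⋂ i ∈ I, F i).Nonempty) :
    ((P : Set E) ∩ ⋂ i ∈ s, F i).Nonempty := by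
  obtain ⟨x₀, hx₀, -⟩ := h_inter ∅ (empty_subset s) (by simp)
  let toP : P.direction → E := fun v => (v : E) + x₀
  have h_preimage : ∀ y ∈ (P : Set E), ∃ v, toP v = y := fun y hy =>
    ⟨⟨y - x₀, AffineSubspace.vsub_mem_direction hy hx₀⟩, sub_add_cancel y x₀⟩
  obtain ⟨v, hv⟩ := helly_theorem' (𝕜 := 𝕜) (F := fun i => toP ⁻¹' F i) (s := s)
    (fun i hi => ((h_convex i hi).translate_preimage_left x₀).linear_preimage P.direction.subtype)
    (fun I hIs hI => by
      obtain ⟨y, hyP, hyF⟩ := h_inter I hIs hI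
      obtain ⟨v, rfl⟩ := h_preimage y hyP
      exact ⟨v, by simpa using hyF⟩)
  exact ⟨toP v, AffineSubspace.vadd_mem_of_mem_direction v.2 hx₀, by simpa using hv⟩

theorem helly_theorem_hyperplane [FiniteDimensional 𝕜 E] {f : Dual 𝕜 E} (hf : f ≠ 0) (c : 𝕜)
    (h_convex : ∀ i ∈ s, Convex 𝕜 (F i))
    (h_inter : ∀ I ⊆ s, #I ≤ finrank 𝕜 E → (f ⁻¹' {c} ∩ ⋂ i ∈ I, F i).Nonempty) :
    (f ⁻¹' {c} ∩ ⋂ i ∈ s, F i).Nonempty := by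
  obtain ⟨x₀, hx₀⟩ := LinearMap.surjective hf c
  have h_level : f ⁻¹' {c} = (AffineSubspace.mk' x₀ (LinearMap.ker f) : Set E) := by
    ext x
    simp [AffineSubspace.mem_mk', hx₀, sub_eq_zero]
  rw [h_level] at h_inter ⊢
  refine helly_theorem_affineSubspace _ h_convex fun I hIs hI => h_inter I hIs ?_
  rwa [AffineSubspace.direction_mk', f.finrank_ker_add_one_of_ne_zero hf] at hI

end Convex

theorem exists_index_avoiding_hyperplane_general {d : ℕ}
    (A : Fin (d + 1) → Set (EuclideanSpace ℝ (Fin d)))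
    (hconv : ∀ i, Convex ℝ (A i))
    (hempty : (⋂ i, A i) = ∅)
    (w : Fin d → ℝ) (c : ℝ) (hw : w ≠ 0) :
    ∃ j : Fin (d + 1),
      (⋂ k ∈ ({j}ᶜ : Set (Fin (d + 1))), A k) ∩ {x | ∑ i, w i * x i = c} = ∅ := by
  by_contra! h_meet
  let f : Dual ℝ (EuclideanSpace ℝ (Fin d)) := ∑ i, w i • (EuclideanSpace.proj i).toLinearMap
  have hf_apply (x : EuclideanSpace ℝ (Fin d)) : f x = ∑ i, w i * x i := by simp [f]
  have hf : f ≠ 0 := by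
    obtain ⟨i₀, hi₀⟩ := Function.ne_iff.mp hw
    refine fun h => hi₀ ?_
    simpa [hf_apply, PiLp.single_apply] using LinearMap.congr_fun h (EuclideanSpace.single i₀ 1)
  have hH : f ⁻¹' {c} = {x | ∑ i, w i * x i = c} := by ext; simp [hf_apply]
  obtain ⟨x, -, hx⟩ := Convex.helly_theorem_hyperplane hf c (s := univ) (fun i _ => hconv i)
    fun I _ hI => by
      rw [finrank_euclideanSpace_fin] at hI
      obtain ⟨j, hj⟩ : ∃ j, j ∉ I := by
        by_contra! h
        simp [eq_univ_of_forall h] at hI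
      rw [hH, Set.inter_comm]
      refine (h_meet j).mono (Set.inter_subset_inter_left _ ?_)
      exact Set.biInter_subset_biInter_left fun i hi => ne_of_mem_of_not_mem hi hj
  exact Set.eq_empty_iff_forall_notMem.1 hempty x (by simpa using hx)

/-- If `A₁, …, A_{d+1}` are convex sets in `ℝ^d` with empty common
intersection such that every `d` of them have a common point, then for every
hyperplane `H'` (given as `{x | ∑ j, w j * x j = c}` with `w ≠ 0`) there is an
index `j` such that `B j := ⋂_{k ≠ j} A k` is disjoint from `H'`. -/
theorem exists_index_avoiding_hyperplane {d : ℕ}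
    (A : Fin (d + 1) → Set (EuclideanSpace ℝ (Fin d)))
    (hconv : ∀ i, Convex ℝ (A i))
    (hempty : (⋂ i, A i) = ∅)
    (hdwise : ∀ j : Fin (d + 1), (⋂ k ∈ ({j}ᶜ : Set (Fin (d + 1))), A k).Nonempty)
    (w : Fin d → ℝ) (c : ℝ) (hw : w ≠ 0) :
    ∃ j : Fin (d + 1),
      (⋂ k ∈ ({j}ᶜ : Set (Fin (d + 1))), A k) ∩ {x | ∑ i, w i * x i = c} = ∅ :=
  exists_index_avoiding_hyperplane_general A hconv hempty w c hw
end

section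
/- Let P be a set of n points in general position in ℝ^d (d ≥ 2) and let 0 < ε₁ ≤ ε₂ < 1 satisfy d·ε₁ + ε₂ ≥ d and ε₁ ≥ (2d−1)/(2d+1). Then there exist two points p₁, p₂ ∈ ℝ^d such that every convex set containing more than ε₁·n points of P contains at least one of p₁, p₂, and every convex set containing more than ε₂·n points of P contains both p₁ and p₂. -/
/-!
Let `D` be the largest number of points of `P` that a set with more than `ε₁ n` points can miss.
Cut `P` by a hyperplane `{w = c}` into an upper part `A` of `d ⌊D/2⌋ + 1` points and a lower
part `B`: a set missing at most `D` points misses at most `⌊D/2⌋` points of `A` or of `B`.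
Take `p₁` in the intersection of the hulls of the sets that miss few points of `A` or have more
than `ε₂ n` points, and `p₂` likewise for `B`; both exist by Helly's theorem. If `d + 1` of
these hulls had empty intersection, Helly's theorem inside the hyperplane would give one of
them, `S₀`, such that the intersection `W` of the other `d` hulls misses the hyperplane. The
points of `P` lying in the other `d` sets lie in `W`, hence all on one side of the hyperplane,
and counting the points missed by the sets gives a contradiction on either side.
-/

/-- Number of points of the finite set `P` lying in the set `C`. -/
noncomputable def ptsIn {d : ℕ} (P : Finset (EuclideanSpace ℝ (Fin d)))
    (C : Set (EuclideanSpace ℝ (Fin d))) : ℕ :=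
  ((P : Set (EuclideanSpace ℝ (Fin d))) ∩ C).ncard

/-- `P` is in general position: any `d+1` of its points are affinely independent. -/
def GeneralPosition {d : ℕ} (P : Finset (EuclideanSpace ℝ (Fin d))) : Prop :=
  ∀ S : Finset (EuclideanSpace ℝ (Fin d)), S ⊆ P → S.card = d + 1 →
    AffineIndependent ℝ (fun x : {x // x ∈ S} => (x : EuclideanSpace ℝ (Fin d)))

open Finset Module

namespace Finset

variable {α : Type*} [DecidableEq α]

theorem card_filter_exists_notMem_le (X : Finset α) (I : Finset (Finset α)) :
    #{p ∈ X | ∃ S ∈ I, p ∉ S} ≤ ∑ S ∈ I, #(X \ S) := by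
  refine (card_le_card fun p hp => ?_).trans card_biUnion_le
  obtain ⟨hpX, S, hS, hpS⟩ := mem_filter.mp hp
  exact mem_biUnion.mpr ⟨S, hS, mem_sdiff.mpr ⟨hpX, hpS⟩⟩

theorem exists_forall_mem_of_sum_card_sdiff_lt {X : Finset α} {I : Finset (Finset α)}
    (h : ∑ S ∈ I, #(X \ S) < #X) : ∃ p ∈ X, ∀ S ∈ I, p ∈ S := by
  by_contra! hX
  have hbound := card_filter_exists_notMem_le X I
  rw [filter_true_of_mem hX] at hbound
  omega

theorem exists_subset_card_eq_forall_le {β : Type*} [LinearOrder β] [Nonempty β]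
    (P : Finset α) (f : α → β) {a : ℕ} (ha : a ≤ #P) :
    ∃ A ⊆ P, #A = a ∧ ∃ c, (∀ p ∈ A, c ≤ f p) ∧ ∀ p ∈ P \ A, f p ≤ c := by
  induction a with
  | zero =>
    obtain ⟨c, hc⟩ := (P.image f).bddAbove
    exact ⟨∅, empty_subset _, rfl, c, by simp, fun p hp =>
      hc (mem_coe.mpr (mem_image_of_mem f (mem_sdiff.mp hp).1))⟩
  | succ a ih =>
    obtain ⟨A, hAP, hA, c, hcA, hcP⟩ := ih (by omega)
    have hne : (P \ A).Nonempty := by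
      rw [← card_pos, card_sdiff_of_subset hAP]; omega
    obtain ⟨y, hy, hymax⟩ := exists_max_image (P \ A) f hne
    refine ⟨insert y A, insert_subset (mem_sdiff.mp hy).1 hAP, ?_, f y, ?_, ?_⟩
    · rw [card_insert_of_notMem (mem_sdiff.mp hy).2, hA]
    · intro p hp
      rcases mem_insert.mp hp with rfl | hp
      · exact le_rfl
      · exact (hcP y hy).trans (hcA p hp)
    · intro p hp
      rw [sdiff_insert] at hp
      exact hymax p (mem_of_mem_erase hp)

end Finset

section Convex

variable {E F : Type*} [AddCommGroup E] [Module ℝ E] [AddCommGroup F] [Module ℝ F]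

theorem Convex.forall_lt_or_forall_gt_of_forall_ne {W : Set E} (hW : Convex ℝ W)
    (w : E →ₗ[ℝ] ℝ) {c : ℝ} (h : ∀ x ∈ W, w x ≠ c) :
    (∀ x ∈ W, w x < c) ∨ ∀ x ∈ W, c < w x := by
  by_contra! ⟨⟨x, hx, hxc⟩, y, hy, hyc⟩
  obtain ⟨z, hz, hzc⟩ := (hW.linear_image w).ordConnected.out (Set.mem_image_of_mem w hy)
    (Set.mem_image_of_mem w hx) ⟨hyc, hxc⟩
  exact h z hz hzc

variable [FiniteDimensional ℝ E] {ι : Type*}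

theorem Convex.helly_theorem_fiber' {K : ι → Set E} {s : Finset ι} (f : E →ₗ[ℝ] F) (y : F)
    (h_convex : ∀ i ∈ s, Convex ℝ (K i))
    (h_inter : ∀ I ⊆ s, #I ≤ finrank ℝ (LinearMap.ker f) + 1 →
      (f ⁻¹' {y} ∩ ⋂ i ∈ I, K i).Nonempty) :
    (f ⁻¹' {y} ∩ ⋂ i ∈ s, K i).Nonempty := by
  obtain ⟨o, ho, -⟩ := h_inter ∅ (empty_subset s) (by simp)
  let g : LinearMap.ker f → E := fun v => o + v
  have hg : ∀ v, f (g v) = y := fun v => by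
    simp [g, show f o = y from ho, LinearMap.mem_ker.mp v.2]
  have hfiber : ∀ x ∈ f ⁻¹' {y}, ∃ v, g v = x := fun x hx =>
    ⟨⟨x - o, by simp_all⟩, add_sub_cancel o x⟩
  obtain ⟨v, hv⟩ := Convex.helly_theorem' (𝕜 := ℝ) (F := fun i => g ⁻¹' K i) (s := s)
    (fun i hi => ((h_convex i hi).translate_preimage_right o).linear_preimage
      (LinearMap.ker f).subtype) (fun I hI hIcard => by
        obtain ⟨x, hx, hxK⟩ := h_inter I hI hIcard
        obtain ⟨v, rfl⟩ := hfiber x hx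
        exact ⟨v, by simpa using hxK⟩)
  exact ⟨g v, hg v, by simpa using hv⟩

theorem Convex.exists_forall_ne_of_biInter_eq_empty [DecidableEq ι] {K : ι → Set E}
    {s : Finset ι} (f : E →ₗ[ℝ] F) (y : F) (h_convex : ∀ i ∈ s, Convex ℝ (K i))
    (hs : finrank ℝ (LinearMap.ker f) + 1 < #s) (h : ⋂ i ∈ s, K i = ∅) :
    ∃ j ∈ s, ∀ x ∈ ⋂ i ∈ s.erase j, K i, f x ≠ y := by
  by_contra! hall
  obtain ⟨x, -, hx⟩ := Convex.helly_theorem_fiber' f y h_convex fun I hI hIcard => by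
    obtain ⟨j, hjs, hjI⟩ := exists_of_ssubset (hI.ssubset_of_ne (by rintro rfl; omega))
    obtain ⟨x, hx, hxy⟩ := hall j hjs
    exact ⟨x, hxy, Set.mem_iInter₂.mpr fun i hi =>
      Set.mem_iInter₂.mp hx i (mem_erase.mpr ⟨by rintro rfl; exact hjI hi, hI hi⟩)⟩
  simp [h] at hx

end Convex

section HalvingHyperplane

variable {E : Type*} [AddCommGroup E] [Module ℝ E] [FiniteDimensional ℝ E] [DecidableEq E]

theorem nonempty_biInter_convexHull_of_card_sdiff_le {P X : Finset E} {I : Finset (Finset E)}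
    {w : E →ₗ[ℝ] ℝ} (hw : w ≠ 0) {c : ℝ} {D θ : ℕ}
    (hX_gt : ∀ p ∈ P, c < w p → p ∈ X) (hX_ge : ∀ p ∈ X, c ≤ w p)
    (hI : #I = finrank ℝ E + 1) (hIP : ∀ S ∈ I, #(P \ S) ≤ D) (hIX : ∀ S ∈ I, #(X \ S) ≤ θ)
    (hP : finrank ℝ E * D + θ < #P) (hX : finrank ℝ E * θ < #X) :
    (⋂ S ∈ I, convexHull ℝ (S : Set E)).Nonempty := by
  by_contra! hempty
  have hker : finrank ℝ (LinearMap.ker w) + 1 < #I := by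
    have := Submodule.finrank_lt (mt LinearMap.ker_eq_top.mp hw)
    omega
  obtain ⟨S₀, hS₀, hW⟩ := Convex.exists_forall_ne_of_biInter_eq_empty w c
    (fun _ _ => convex_convexHull ℝ _) hker hempty
  have hmem_W : ∀ p, (∀ T ∈ I.erase S₀, p ∈ T) → p ∈ ⋂ T ∈ I.erase S₀, convexHull ℝ (T : Set E) :=
    fun p hp => Set.mem_iInter₂.mpr fun T hT => subset_convexHull ℝ _ (hp T hT)
  have hsum_erase : ∀ (Y : Finset E) (k : ℕ), (∀ T ∈ I, #(Y \ T) ≤ k) →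
      ∑ T ∈ I.erase S₀, #(Y \ T) ≤ finrank ℝ E * k := fun Y k hk => by
    simpa [card_erase_of_mem hS₀, hI] using
      sum_le_card_nsmul (I.erase S₀) _ k fun T hT => hk T (mem_of_mem_erase hT)
  rcases (convex_iInter₂ fun T _ => convex_convexHull ℝ _).forall_lt_or_forall_gt_of_forall_ne
    w hW with hbelow | habove
  · -- each point of `X` lies on the upper side, hence outside some `T ≠ S₀`
    have hcover : {p ∈ X | ∃ T ∈ I.erase S₀, p ∉ T} = X := filter_true_of_mem fun p hp => by
      by_contra! hall
      exact (hX_ge p hp).not_gt (hbelow p (hmem_W p hall))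
    have := card_filter_exists_notMem_le X (I.erase S₀)
    rw [hcover] at this
    have := hsum_erase X θ hIX
    omega
  · -- the points of `P` in every `T ≠ S₀` lie above the hyperplane, hence in `X \ S₀`
    have hcover : P ⊆ (X \ S₀) ∪ {p ∈ P | ∃ T ∈ I.erase S₀, p ∉ T} := fun p hp => by
      by_cases hall : ∀ T ∈ I.erase S₀, p ∈ T
      · refine mem_union_left _
          (mem_sdiff.mpr ⟨hX_gt p hp (habove p (hmem_W p hall)), fun hpS₀ => ?_⟩)
        refine Set.eq_empty_iff_forall_notMem.mp hempty p (Set.mem_iInter₂.mpr fun T hT =>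
          subset_convexHull ℝ (T : Set E) (mem_coe.mpr ?_))
        by_cases hTS₀ : T = S₀
        · exact hTS₀ ▸ hpS₀
        · exact hall T (mem_erase.mpr ⟨hTS₀, hT⟩)
      · push Not at hall
        exact mem_union_right _ (mem_filter.mpr ⟨hp, hall⟩)
    have := (card_le_card hcover).trans (card_union_le _ _)
    have := card_filter_exists_notMem_le P (I.erase S₀)
    have := hsum_erase P D hIP
    have := hIX S₀ hS₀
    omega

theorem exists_mem_convexHull_of_card_sdiff_le {P X : Finset E} {w : E →ₗ[ℝ] ℝ} (hw : w ≠ 0)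
    {c : ℝ} {D D₂ θ : ℕ} (hX_gt : ∀ p ∈ P, c < w p → p ∈ X) (hX_ge : ∀ p ∈ X, c ≤ w p)
    (hD₂ : D₂ ≤ D) (hP : finrank ℝ E * D + θ < #P) (hP₂ : finrank ℝ E * D + D₂ < #P)
    (hX : finrank ℝ E * θ < #X) :
    ∃ x : E, ∀ S ⊆ P, (#(P \ S) ≤ D ∧ #(X \ S) ≤ θ) ∨ #(P \ S) ≤ D₂ →
      x ∈ convexHull ℝ (S : Set E) := by
  obtain ⟨x, hx⟩ := Convex.helly_theorem' (𝕜 := ℝ) (E := E)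
    (F := fun S : Finset E => convexHull ℝ (S : Set E))
    (s := {S ∈ P.powerset | (#(P \ S) ≤ D ∧ #(X \ S) ≤ θ) ∨ #(P \ S) ≤ D₂})
    (fun _ _ => convex_convexHull ℝ _) fun I hI hIcard => by
      have hmem (S) (hS : S ∈ I) := (mem_filter.mp (hI hS)).2
      have hID : ∀ S ∈ I, #(P \ S) ≤ D := fun S hS => by have := hmem S hS; omega
      by_cases hkey : #I = finrank ℝ E + 1 ∧ ∀ S ∈ I, #(X \ S) ≤ θ
      · exact nonempty_biInter_convexHull_of_card_sdiff_le hw hX_gt hX_ge hkey.1 hID hkey.2 hP hX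
      -- otherwise a point of `P` lies in every member of `I`
      suffices ∑ S ∈ I, #(P \ S) < #P by
        obtain ⟨p, -, hp⟩ := exists_forall_mem_of_sum_card_sdiff_lt this
        exact ⟨p, Set.mem_iInter₂.mpr fun S hS => subset_convexHull ℝ (S : Set E) (hp S hS)⟩
      have hsum (J : Finset (Finset E)) (hJ : J ⊆ I) : ∑ S ∈ J, #(P \ S) ≤ #J * D := by
        simpa using sum_le_card_nsmul J _ D fun S hS => hID S (hJ hS)
      rcases hIcard.lt_or_eq with hlt | heq
      · have := hsum I subset_rfl
        have : #I * D ≤ finrank ℝ E * D := Nat.mul_le_mul_right D (by omega)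
        omega
      · obtain ⟨T, hT, hTθ⟩ := not_forall₂.mp (not_and.mp hkey heq)
        have hTD₂ : #(P \ T) ≤ D₂ := (hmem T hT).resolve_left fun h => hTθ h.2
        rw [← add_sum_erase I _ hT]
        have := hsum (I.erase T) (erase_subset T I)
        rw [card_erase_of_mem hT, heq, Nat.add_sub_cancel] at this
        omega
  exact ⟨x, fun S hS hS' => Set.mem_iInter₂.mp hx S (mem_filter.mpr ⟨mem_powerset.mpr hS, hS'⟩)⟩

theorem exists_two_points_mem_convexHull {P : Finset E} (hP : 2 ≤ #P) {D D₂ : ℕ}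
    (hD : (2 * finrank ℝ E + 1) * D < 2 * #P) (hD₂ : D₂ ≤ D)
    (hP₂ : finrank ℝ E * D + D₂ < #P) :
    ∃ p₁ p₂ : E, ∀ S ⊆ P,
      (#(P \ S) ≤ D → p₁ ∈ convexHull ℝ (S : Set E) ∨ p₂ ∈ convexHull ℝ (S : Set E)) ∧
      (#(P \ S) ≤ D₂ → p₁ ∈ convexHull ℝ (S : Set E) ∧ p₂ ∈ convexHull ℝ (S : Set E)) := by
  obtain ⟨p, -, q, -, hpq⟩ := one_lt_card.mp hP
  obtain ⟨w, hwpq⟩ := Projective.exists_dual_ne_zero ℝ (sub_ne_zero.mpr hpq)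
  have hw : w ≠ 0 := by rintro rfl; exact hwpq rfl
  set θ := D / 2
  have hdD : (2 * finrank ℝ E + 1) * D = 2 * (finrank ℝ E * D) + D := by ring
  have hdθ : finrank ℝ E * θ + finrank ℝ E * θ ≤ finrank ℝ E * D := by
    rw [← mul_add]; exact Nat.mul_le_mul_left _ (by omega)
  have hθ : finrank ℝ E * D + θ < #P := by omega
  have hsplit : 2 * (finrank ℝ E * θ) + 2 ≤ #P := by
    rcases Nat.eq_zero_or_pos θ with hθ0 | hθ0
    · rw [hθ0, mul_zero]; omega
    · omega
  obtain ⟨A, hAP, hA, c, hcA, hcB⟩ :=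
    P.exists_subset_card_eq_forall_le w (a := finrank ℝ E * θ + 1) (by omega)
  have hB : #(P \ A) = #P - (finrank ℝ E * θ + 1) := by rw [card_sdiff_of_subset hAP, hA]
  obtain ⟨p₁, hp₁⟩ := exists_mem_convexHull_of_card_sdiff_le hw (X := A) (θ := θ)
    (fun p hp hcp => by_contra fun hpA => (hcB p (mem_sdiff.mpr ⟨hp, hpA⟩)).not_gt hcp)
    hcA hD₂ hθ hP₂ (by omega)
  obtain ⟨p₂, hp₂⟩ := exists_mem_convexHull_of_card_sdiff_le (neg_ne_zero.mpr hw) (c := -c)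
    (X := P \ A) (θ := θ)
    (fun p hp hcp => mem_sdiff.mpr ⟨hp, fun hpA => (hcA p hpA).not_gt (by simpa using hcp)⟩)
    (fun p hp => by simpa using hcB p hp) hD₂ hθ hP₂ (by omega)
  refine ⟨p₁, p₂, fun S hS =>
    ⟨fun hSD => ?_, fun hSD₂ => ⟨hp₁ S hS (.inr hSD₂), hp₂ S hS (.inr hSD₂)⟩⟩⟩
  have hcard : #(A \ S) + #((P \ A) \ S) = #(P \ S) := by
    rw [← card_sdiff_add_card_inter (P \ S) A, sdiff_right_comm, add_comm]
    congr 2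
    ext x
    simp only [mem_sdiff, mem_inter]
    constructor
    · exact fun ⟨hxA, hxS⟩ => ⟨⟨hAP hxA, hxS⟩, hxA⟩
    · exact fun ⟨⟨_, hxS⟩, hxA⟩ => ⟨hxA, hxS⟩
  rcases le_or_gt #(A \ S) θ with hAS | hAS
  · exact .inl (hp₁ S hS (.inl ⟨hSD, hAS⟩))
  · exact .inr (hp₂ S hS (.inl ⟨hSD, by omega⟩))

end HalvingHyperplane

/-- The largest number of points, out of `N`, that a set of more than `ε * N` of them can miss. -/
noncomputable def maxMissed (ε : ℝ) (N : ℕ) : ℕ := ⌈(1 - ε) * N⌉₊ - 1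

theorem cast_maxMissed_lt {ε : ℝ} {N : ℕ} (hε : ε < 1) (hN : 0 < N) :
    (maxMissed ε N : ℝ) < (1 - ε) * N := by
  have hpos : 0 < (1 - ε) * N := mul_pos (by linarith) (by exact_mod_cast hN)
  exact ((Nat.ceil_eq_iff (Nat.ceil_pos.mpr hpos).ne').mp rfl).1

theorem maxMissed_anti {ε₁ ε₂ : ℝ} (h : ε₁ ≤ ε₂) (N : ℕ) : maxMissed ε₂ N ≤ maxMissed ε₁ N :=
  Nat.sub_le_sub_right (Nat.ceil_mono (by gcongr)) 1

section PtsIn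

variable {d : ℕ} {P : Finset (EuclideanSpace ℝ (Fin d))} {C : Set (EuclideanSpace ℝ (Fin d))}

theorem exists_forall_mem_of_card_le_one (hP : #P ≤ 1) :
    ∃ x, ∀ (C : Set (EuclideanSpace ℝ (Fin d))) (ε : ℝ), 0 ≤ ε → (ptsIn P C : ℝ) > ε * #P →
      x ∈ C := by
  obtain ⟨x, hx⟩ := card_le_one_iff_subset_singleton.mp hP
  refine ⟨x, fun C ε hε hC => ?_⟩
  obtain ⟨p, hpP, hpC⟩ := (Set.ncard_pos (Set.toFinite _)).mp
    (Nat.cast_pos.mp ((by positivity : 0 ≤ ε * #P).trans_lt hC))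
  rwa [← mem_singleton.mp (hx hpP)]

theorem card_sdiff_filter_le_maxMissed [DecidablePred (· ∈ C)] {ε : ℝ}
    (h : (ptsIn P C : ℝ) > ε * #P) : #(P \ {p ∈ P | p ∈ C}) ≤ maxMissed ε #P := by
  have hcount : ptsIn P C = #{p ∈ P | p ∈ C} := by
    rw [ptsIn, ← Set.ncard_coe_finset]
    congr 1
    ext
    simp
  refine Nat.le_sub_one_of_lt (Nat.lt_ceil.mpr ?_)
  rw [card_sdiff_of_subset (filter_subset _ _), Nat.cast_sub (card_filter_le _ _)]
  rw [hcount] at h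
  linarith

theorem convexHull_filter_mem_subset (hC : Convex ℝ C) [DecidablePred (· ∈ C)] :
    convexHull ℝ (({p ∈ P | p ∈ C} : Finset _) : Set (EuclideanSpace ℝ (Fin d))) ⊆ C :=
  convexHull_min (fun _ hp => (mem_filter.mp hp).2) hC

end PtsIn

theorem weighted_net_convex_general {d : ℕ}
    (P : Finset (EuclideanSpace ℝ (Fin d))) (n : ℕ) (hn : P.card = n)
    (ε₁ ε₂ : ℝ) (hε₁ : 0 < ε₁) (hε₁₂ : ε₁ ≤ ε₂) (hε₂ : ε₂ < 1)
    (hsum : d * ε₁ + ε₂ ≥ d)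
    (hlow : ε₁ ≥ (2 * d - 1) / (2 * d + 1)) :
    ∃ p₁ p₂ : EuclideanSpace ℝ (Fin d),
      (∀ C : Set (EuclideanSpace ℝ (Fin d)), Convex ℝ C →
        (ptsIn P C : ℝ) > ε₁ * n → p₁ ∈ C ∨ p₂ ∈ C) ∧
      (∀ C : Set (EuclideanSpace ℝ (Fin d)), Convex ℝ C →
        (ptsIn P C : ℝ) > ε₂ * n → p₁ ∈ C ∧ p₂ ∈ C) := by
  classical
  subst hn
  rcases le_or_gt #P 1 with hP | hP
  · obtain ⟨x, hx⟩ := exists_forall_mem_of_card_le_one hP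
    have hε₂ : 0 ≤ ε₂ := hε₁.le.trans hε₁₂
    exact ⟨x, x, fun C _ hC => .inl (hx C ε₁ hε₁.le hC),
      fun C _ hC => ⟨hx C ε₂ hε₂ hC, hx C ε₂ hε₂ hC⟩⟩
  have hD₁ := cast_maxMissed_lt (hε₁₂.trans_lt hε₂) (by omega : 0 < #P)
  have hD₂ := cast_maxMissed_lt hε₂ (by omega : 0 < #P)
  have hlow' : 2 * d - 1 ≤ ε₁ * (2 * d + 1) := (div_le_iff₀ (by positivity)).mp hlow
  have hD : ((2 * d + 1) * maxMissed ε₁ #P : ℝ) < 2 * #P := by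
    nlinarith [mul_lt_mul_of_pos_left hD₁ (by positivity : (0 : ℝ) < 2 * d + 1)]
  have hD₁D₂ : (d * maxMissed ε₁ #P + maxMissed ε₂ #P : ℝ) < #P := by
    nlinarith [mul_le_mul_of_nonneg_left hD₁.le d.cast_nonneg]
  obtain ⟨p₁, p₂, hnet⟩ := exists_two_points_mem_convexHull (P := P) (by omega)
    (by rw [finrank_euclideanSpace_fin]; exact_mod_cast hD) (maxMissed_anti hε₁₂ _)
    (by rw [finrank_euclideanSpace_fin]; exact_mod_cast hD₁D₂)
  refine ⟨p₁, p₂, fun C hC hPC => ?_, fun C hC hPC => ?_⟩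
  · exact ((hnet _ (filter_subset _ P)).1 (card_sdiff_filter_le_maxMissed hPC)).imp
      (convexHull_filter_mem_subset hC ·) (convexHull_filter_mem_subset hC ·)
  · exact ((hnet _ (filter_subset _ P)).2 (card_sdiff_filter_le_maxMissed hPC)).imp
      (convexHull_filter_mem_subset hC ·) (convexHull_filter_mem_subset hC ·)

/-- weighted ε-nets of size 2 for convex sets in `ℝ^d`. -/
theorem weighted_net_convex {d : ℕ} (hd : 2 ≤ d)
    (P : Finset (EuclideanSpace ℝ (Fin d))) (n : ℕ) (hn : P.card = n)
    (hgp : GeneralPosition P)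
    (ε₁ ε₂ : ℝ) (hε₁ : 0 < ε₁) (hε₁₂ : ε₁ ≤ ε₂) (hε₂ : ε₂ < 1)
    (hsum : d * ε₁ + ε₂ ≥ d)
    (hlow : ε₁ ≥ (2 * d - 1) / (2 * d + 1)) :
    ∃ p₁ p₂ : EuclideanSpace ℝ (Fin d),
      (∀ C : Set (EuclideanSpace ℝ (Fin d)), Convex ℝ C →
        (ptsIn P C : ℝ) > ε₁ * n → p₁ ∈ C ∨ p₂ ∈ C) ∧
      (∀ C : Set (EuclideanSpace ℝ (Fin d)), Convex ℝ C →
        (ptsIn P C : ℝ) > ε₂ * n → p₁ ∈ C ∧ p₂ ∈ C) :=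
  weighted_net_convex_general P n hn ε₁ ε₂ hε₁ hε₁₂ hε₂ hsum hlow
end

section
/- For every d ≥ 2 there exists a set P of d+2 points in ℝ^d such that for any two points p₁, p₂ ∈ ℝ^d there is a compact convex set containing d points of P but containing neither p₁ nor p₂. -/
/-!
Take the standard basis vectors `eᵢ` (a simplex in the hyperplane `∑ xₖ = 1`) and the apexes
`±(1, …, 1)`. Every `d`-subset used is `P` minus two points and lies in a hyperplane: the base
`∑ xₖ = 1` (both apexes dropped), the hyperplane through one apex and the facet opposite `eᵢ`
(the other apex and `eᵢ` dropped), or `xᵢ = xⱼ` (`eᵢ` and `eⱼ` dropped). If neither `p₁` nor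
`p₂` lies on the diagonal, some pair of coordinates `i, j` separates both. If `p₁` lies on
the diagonal, it lies on no facet hyperplane through an apex other than itself, and the `d`
facet hyperplanes through an apex meet only in that apex; so a facet hyperplane misses both
points, unless `{p₁, p₂}` is the pair of apexes, which the base misses.
-/

theorem Function.exists_apply_ne_apply_ne {α β γ : Type*} {f : α → β} {g : α → γ}
    (hf : ∃ a b, f a ≠ f b) (hg : ∃ a b, g a ≠ g b) :
    ∃ a b, f a ≠ f b ∧ g a ≠ g b := by
  obtain ⟨a, b, hab⟩ := hf
  by_cases hgab : g a = g b
  · obtain ⟨c, e, hce⟩ := hg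
    obtain ⟨c, hc⟩ : ∃ c, g c ≠ g a := by
      by_contra! h
      exact hce ((h c).trans (h e).symm)
    by_cases hfc : f c = f a
    · exact ⟨c, b, hfc ▸ hab, hgab ▸ hc⟩
    · exact ⟨c, a, hfc, hc⟩
  · exact ⟨a, b, hab, hgab⟩

open Finset

section AllButTwo

variable {E : Type*} [AddCommGroup E] [Module ℝ E]

def CoversAllButTwoAvoiding (P : Finset E) (p q : E) : Prop :=
  ∃ a ∈ P, ∃ b ∈ P, a ≠ b ∧ ∃ Q : Set E, Convex ℝ Q ∧
    (∀ x ∈ P, x ≠ a → x ≠ b → x ∈ Q) ∧ p ∉ Q ∧ q ∉ Q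

lemma CoversAllButTwoAvoiding.symm {P : Finset E} {p q : E}
    (h : CoversAllButTwoAvoiding P p q) : CoversAllButTwoAvoiding P q p := by
  obtain ⟨a, ha, b, hb, hab, Q, hQ, hPQ, hp, hq⟩ := h
  exact ⟨a, ha, b, hb, hab, Q, hQ, hPQ, hq, hp⟩

end AllButTwo

section PtsIn

variable {d : ℕ}

lemma card_le_ptsIn_convexHull {P T : Finset (EuclideanSpace ℝ (Fin d))} (hTP : T ⊆ P) :
    #T ≤ ptsIn P (convexHull ℝ T) := by
  rw [ptsIn, ← Set.ncard_coe_finset]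
  exact Set.ncard_le_ncard (fun x hx => ⟨hTP hx, subset_convexHull ℝ _ hx⟩)
    (P.finite_toSet.inter_of_left _)

lemma CoversAllButTwoAvoiding.exists_isCompact_convex
    {P : Finset (EuclideanSpace ℝ (Fin d))} {p q : EuclideanSpace ℝ (Fin d)}
    (h : CoversAllButTwoAvoiding P p q) :
    ∃ C : Set (EuclideanSpace ℝ (Fin d)), IsCompact C ∧ Convex ℝ C ∧
      #P - 2 ≤ ptsIn P C ∧ p ∉ C ∧ q ∉ C := by
  obtain ⟨a, ha, b, hb, hab, Q, hQ, hPQ, hp, hq⟩ := h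
  set T := (P.erase a).erase b
  have hTQ : convexHull ℝ (T : Set _) ⊆ Q := convexHull_min (fun x hx => by
    simp only [T, coe_erase, Set.mem_sdiff, Set.mem_singleton_iff, mem_coe] at hx
    exact hPQ x hx.1.1 hx.1.2 hx.2) hQ
  have hT : #T = #P - 2 := by
    rw [card_erase_of_mem (mem_erase.2 ⟨hab.symm, hb⟩), card_erase_of_mem ha]
    omega
  refine ⟨convexHull ℝ T, T.finite_toSet.isCompact_convexHull ℝ, convex_convexHull ℝ _,
    hT ▸ card_le_ptsIn_convexHull ((erase_subset _ _).trans (erase_subset _ _)),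
    fun h => hp (hTQ h), fun h => hq (hTQ h)⟩

end PtsIn

namespace SimplexBipyramid

variable {d : ℕ}

noncomputable def diag (d : ℕ) (t : ℝ) : EuclideanSpace ℝ (Fin d) := WithLp.toLp 2 fun _ => t

/-- The apexes `±(1, …, 1)` lie on the perpendicular to `∑ xₖ = 1` through the centroid of
the simplex, on opposite sides. -/
noncomputable def points (d : ℕ) : Finset (EuclideanSpace ℝ (Fin d)) :=
  insert (diag d 1) (insert (diag d (-1)) (univ.image fun i => EuclideanSpace.single i 1))

def baseHyperplane (d : ℕ) : Set (EuclideanSpace ℝ (Fin d)) := {x | ∑ k, x k = 1}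

/-- The hyperplane through the apex `diag d a` and the facet of the base simplex opposite to the
`i`-th vertex. -/
def facetHyperplane (a : ℝ) (i : Fin d) : Set (EuclideanSpace ℝ (Fin d)) :=
  {x | a * (∑ k, x k - 1) = (d * a - 1) * x i}

@[simp] lemma diag_apply (t : ℝ) (k : Fin d) : diag d t k = t := rfl

lemma sum_diag (t : ℝ) : ∑ k, diag d t k = d * t := by simp

lemma sum_single (i : Fin d) : ∑ k, (EuclideanSpace.single i (1 : ℝ)) k = 1 := by simp

lemma natCast_mul_ne_one (hd : 2 ≤ d) {a : ℝ} (ha : a = 1 ∨ a = -1) :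
    (d : ℝ) * a ≠ 1 := by
  have : (2 : ℝ) ≤ d := by exact_mod_cast hd
  rcases ha with rfl | rfl <;> intro h <;> linarith

lemma diag_ne_single {t : ℝ} (ht : (d : ℝ) * t ≠ 1) (i : Fin d) :
    diag d t ≠ EuclideanSpace.single i 1 := fun h =>
  ht (by rw [← sum_diag, h, sum_single])

lemma diag_notMem_image_single {t : ℝ} (ht : (d : ℝ) * t ≠ 1) :
    diag d t ∉ univ.image fun i => EuclideanSpace.single i 1 := by
  simpa using fun i => (diag_ne_single ht i).symm

lemma diag_one_ne_diag_neg_one (hd : d ≠ 0) : diag d 1 ≠ diag d (-1) := fun h => by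
  have := congr($h ⟨0, Nat.pos_of_ne_zero hd⟩)
  norm_num at this

lemma card_points (hd : 2 ≤ d) : #(points d) = d + 2 := by
  have hinj : Function.Injective fun i : Fin d => EuclideanSpace.single i (1 : ℝ) :=
    fun i j h => ((by simpa using congr($h j)) : j = i).symm
  rw [points, card_insert_of_notMem, card_insert_of_notMem (diag_notMem_image_single
      (natCast_mul_ne_one hd (.inr rfl))), card_image_of_injective _ hinj, card_univ,
    Fintype.card_fin]
  rw [mem_insert, not_or]
  exact ⟨diag_one_ne_diag_neg_one (by omega),
    diag_notMem_image_single (natCast_mul_ne_one hd (.inl rfl))⟩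

lemma forall_mem_points {R : EuclideanSpace ℝ (Fin d) → Prop} :
    (∀ x ∈ points d, R x) ↔
      R (diag d 1) ∧ R (diag d (-1)) ∧ ∀ k, R (EuclideanSpace.single k 1) := by
  simp [points]

lemma diag_mem_points {a : ℝ} (ha : a = 1 ∨ a = -1) : diag d a ∈ points d := by
  rcases ha with rfl | rfl <;> simp [points]

lemma single_mem_points (i : Fin d) : EuclideanSpace.single i 1 ∈ points d := by
  simp [points]

lemma convex_baseHyperplane : Convex ℝ (baseHyperplane d) := by
  intro x hx y hy s t _ _ hst
  simp only [baseHyperplane, Set.mem_ofPred_eq, PiLp.add_apply, PiLp.smul_apply, smul_eq_mul,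
    sum_add_distrib, ← mul_sum] at *
  rw [hx, hy, mul_one, mul_one, hst]

lemma convex_facetHyperplane (a : ℝ) (i : Fin d) : Convex ℝ (facetHyperplane a i) := by
  intro x hx y hy s t _ _ hst
  simp only [facetHyperplane, Set.mem_ofPred_eq, PiLp.add_apply, PiLp.smul_apply, smul_eq_mul,
    sum_add_distrib, ← mul_sum] at *
  linear_combination s * hx + t * hy + a * hst

lemma convex_setOf_apply_eq (i j : Fin d) :
    Convex ℝ {x : EuclideanSpace ℝ (Fin d) | x i = x j} := by
  intro x hx y hy s t _ _ _
  simp only [Set.mem_ofPred_eq, PiLp.add_apply, PiLp.smul_apply] at *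
  rw [hx, hy]

lemma diag_mem_facetHyperplane (a : ℝ) (i : Fin d) : diag d a ∈ facetHyperplane a i := by
  rw [facetHyperplane, Set.mem_ofPred_eq, sum_diag, diag_apply]
  ring

lemma single_mem_facetHyperplane (a : ℝ) {i k : Fin d} (hki : k ≠ i) :
    EuclideanSpace.single k 1 ∈ facetHyperplane a i := by
  simp [facetHyperplane, hki.symm]

lemma eq_diag_of_mem_facetHyperplane {p : EuclideanSpace ℝ (Fin d)} (hp : ∀ i j, p i = p j)
    {a : ℝ} {i : Fin d} (h : p ∈ facetHyperplane a i) : p = diag d a := by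
  have hsum : ∑ k, p k = d * p i := by simp [hp _ i]
  have hpi : p i = a := by
    simp only [facetHyperplane, Set.mem_ofPred_eq, hsum] at h
    linarith
  ext k
  rw [hp k i, hpi, diag_apply]

/-- `d * a ≠ 1` says that the apex is off the base hyperplane. -/
lemma exists_notMem_facetHyperplane {a : ℝ} (hda : (d : ℝ) * a ≠ 1)
    {p : EuclideanSpace ℝ (Fin d)} (hp : p ≠ diag d a) : ∃ i, p ∉ facetHyperplane a i := by
  by_contra! h
  have hconst : ∀ i j, p i = p j := fun i j =>
    mul_left_cancel₀ (sub_ne_zero.2 hda) ((h i).symm.trans (h j))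
  refine hp (PiLp.ext fun k => ?_)
  rw [eq_diag_of_mem_facetHyperplane hconst (h k)]

lemma coversAllButTwoAvoiding_of_apply_ne {p q : EuclideanSpace ℝ (Fin d)} {i j : Fin d}
    (hp : p i ≠ p j) (hq : q i ≠ q j) : CoversAllButTwoAvoiding (points d) p q := by
  have hij : i ≠ j := fun h => hp (by rw [h])
  refine ⟨_, single_mem_points i, _, single_mem_points j, fun h => hij ?_,
    {x | x i = x j}, convex_setOf_apply_eq i j, forall_mem_points.2 ⟨by simp, by simp, ?_⟩,
    hp, hq⟩
  · simpa using congr($h i)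
  · intro k hki hkj
    have hki : k ≠ i := fun h => hki (h ▸ rfl)
    have hkj : k ≠ j := fun h => hkj (h ▸ rfl)
    simp [hki.symm, hkj.symm]

lemma coversAllButTwoAvoiding_of_notMem_facetHyperplane (hd : 2 ≤ d) {a : ℝ}
    (ha : a = 1 ∨ a = -1) {p q : EuclideanSpace ℝ (Fin d)} {i : Fin d}
    (hp : p ∉ facetHyperplane a i) (hq : q ∉ facetHyperplane a i) :
    CoversAllButTwoAvoiding (points d) p q := by
  have hopp : -a = 1 ∨ -a = -1 := by rcases ha with rfl | rfl <;> simp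
  refine ⟨_, diag_mem_points hopp, _, single_mem_points i,
    diag_ne_single (natCast_mul_ne_one hd hopp) i, _, convex_facetHyperplane a i,
    forall_mem_points.2 ⟨fun h _ => ?_, fun h _ => ?_, fun k _ hki => ?_⟩, hp, hq⟩
  · rcases ha with rfl | rfl
    · exact diag_mem_facetHyperplane 1 i
    · exact (h (by norm_num)).elim
  · rcases ha with rfl | rfl
    · exact (h rfl).elim
    · exact diag_mem_facetHyperplane (-1) i
  · exact single_mem_facetHyperplane a fun h => hki (h ▸ rfl)

lemma coversAllButTwoAvoiding_apexes (hd : 2 ≤ d) :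
    CoversAllButTwoAvoiding (points d) (diag d 1) (diag d (-1)) := by
  have hdiag : ∀ {a : ℝ}, (a = 1 ∨ a = -1) → diag d a ∉ baseHyperplane d := fun ha h =>
    natCast_mul_ne_one hd ha (by rw [← sum_diag]; exact h)
  refine ⟨_, diag_mem_points (.inl rfl), _, diag_mem_points (.inr rfl),
    diag_one_ne_diag_neg_one (by omega), baseHyperplane d,
    convex_baseHyperplane, forall_mem_points.2 ⟨fun h => (h rfl).elim, fun _ h => (h rfl).elim,
      fun k _ _ => sum_single k⟩, hdiag (.inl rfl), hdiag (.inr rfl)⟩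

lemma coversAllButTwoAvoiding_of_ne_diag (hd : 2 ≤ d) {a : ℝ} (ha : a = 1 ∨ a = -1)
    {p q : EuclideanSpace ℝ (Fin d)} (hconst : ∀ i j, p i = p j) (hp : p ≠ diag d a)
    (hq : q ≠ diag d a) : CoversAllButTwoAvoiding (points d) p q := by
  obtain ⟨i, hqi⟩ := exists_notMem_facetHyperplane (natCast_mul_ne_one hd ha) hq
  exact coversAllButTwoAvoiding_of_notMem_facetHyperplane hd ha
    (fun h => hp (eq_diag_of_mem_facetHyperplane hconst h)) hqi

lemma coversAllButTwoAvoiding_of_forall_apply_eq (hd : 2 ≤ d) {p : EuclideanSpace ℝ (Fin d)}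
    (hconst : ∀ i j, p i = p j) (q : EuclideanSpace ℝ (Fin d)) :
    CoversAllButTwoAvoiding (points d) p q := by
  by_cases hu : p ≠ diag d 1 ∧ q ≠ diag d 1
  · exact coversAllButTwoAvoiding_of_ne_diag hd (.inl rfl) hconst hu.1 hu.2
  by_cases hw : p ≠ diag d (-1) ∧ q ≠ diag d (-1)
  · exact coversAllButTwoAvoiding_of_ne_diag hd (.inr rfl) hconst hw.1 hw.2
  have huw : diag d 1 ≠ diag d (-1) := diag_one_ne_diag_neg_one (by omega)
  rw [not_and_or, not_ne_iff, not_ne_iff] at hu hw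
  rcases hu with rfl | rfl <;> rcases hw with h | h
  · exact (huw h).elim
  · exact h ▸ coversAllButTwoAvoiding_apexes hd
  · exact h ▸ (coversAllButTwoAvoiding_apexes hd).symm
  · exact (huw h).elim

lemma coversAllButTwoAvoiding_points (hd : 2 ≤ d) (p q : EuclideanSpace ℝ (Fin d)) :
    CoversAllButTwoAvoiding (points d) p q := by
  by_cases hp : ∀ i j, p i = p j
  · exact coversAllButTwoAvoiding_of_forall_apply_eq hd hp q
  by_cases hq : ∀ i j, q i = q j
  · exact (coversAllButTwoAvoiding_of_forall_apply_eq hd hq p).symm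
  push Not at hp hq
  obtain ⟨i, j, hpij, hqij⟩ := Function.exists_apply_ne_apply_ne hp hq
  exact coversAllButTwoAvoiding_of_apply_ne hpij hqij

end SimplexBipyramid

open SimplexBipyramid in
/-- for every `d ≥ 2` there is a set of `d + 2` points in `ℝ^d` such
that any two points `p₁, p₂` miss some compact convex set containing `d` points
of the set. -/
theorem lower_bound_general_dim (d : ℕ) (hd : 2 ≤ d) :
    ∃ P : Finset (EuclideanSpace ℝ (Fin d)), P.card = d + 2 ∧
      ∀ p₁ p₂ : EuclideanSpace ℝ (Fin d),
        ∃ C : Set (EuclideanSpace ℝ (Fin d)), IsCompact C ∧ Convex ℝ C ∧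
          d ≤ ptsIn P C ∧ p₁ ∉ C ∧ p₂ ∉ C := by
  refine ⟨points d, card_points hd, fun p₁ p₂ => ?_⟩
  simpa [card_points hd] using (coversAllButTwoAvoiding_points hd p₁ p₂).exists_isCompact_convex
end

section
/- Let S be a (d−1)-simplex with vertices v₁,…,v_d in ℝ^d and let u₁ lie strictly above the hyperplane containing S (through its centroid). If p₁ lies strictly below the hyperplane containing conv(S), then the sets C_i := conv((vertices of S minus v_i) ∪ {u₁}), i = 1,…,d, do not contain p₁, and the intersection ⋂_{i=1}^d C_i lies strictly above conv(S)'s hyperplane. -/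
/-!
Let `f = ⟪w, ·⟫`. The vertices `v i` lie on the hyperplane `f = c` and `f u₁ = c + t ‖w‖² > c`,
so every `C i` lies in the closed halfspace `f ≥ c`, which misses `p₁`. A point of `C i` with
`f = c` must carry zero weight on the apex `u₁`, hence lies in the facet spanned by
`{v j | j ≠ i}`. By affine independence no point lies in the affine spans of all these facets.
-/

open Set

theorem AffineIndependent.iInter_affineSpan_image_compl_singleton_eq_empty
    {k V P ι : Type*} [Ring k] [Nontrivial k] [AddCommGroup V] [Module k V] [AddTorsor V P]
    [Nonempty ι] {p : ι → P} (ha : AffineIndependent k p) :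
    ⋂ i, (affineSpan k (p '' {i}ᶜ) : Set P) = ∅ := by
  refine eq_empty_iff_forall_notMem.2 fun x hx => ?_
  rw [mem_iInter] at hx
  obtain ⟨fs, w, -, hw, rfl⟩ :=
    eq_affineCombination_of_mem_affineSpan_image (hx (Classical.arbitrary ι))
  have hw_zero : ∀ i ∈ fs, w i = 0 := fun i hi =>
    ha.eq_zero_of_affineCombination_mem_affineSpan hw (hx i) hi (by simp)
  simp [Finset.sum_eq_zero hw_zero] at hw

section HalfSpace

variable {𝕜 E : Type*} [Field 𝕜] [LinearOrder 𝕜] [IsStrictOrderedRing 𝕜]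
  [AddCommGroup E] [Module 𝕜 E] {f : E →ₗ[𝕜] 𝕜} {c : 𝕜} {s : Set E}

theorem convexHull_subset_halfSpace_ge (hs : ∀ y ∈ s, c ≤ f y) :
    convexHull 𝕜 s ⊆ {x | c ≤ f x} :=
  convexHull_min hs (convex_halfSpace_ge f.isLinear c)

theorem mem_convexHull_of_mem_convexHull_insert_of_le {a x : E} (hs : ∀ y ∈ s, c ≤ f y)
    (ha : c < f a) (hx : x ∈ convexHull 𝕜 (insert a s)) (hfx : f x ≤ c) :
    x ∈ convexHull 𝕜 s := by
  rcases s.eq_empty_or_nonempty with rfl | hne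
  · rw [insert_empty_eq, convexHull_singleton, mem_singleton_iff] at hx
    subst hx
    exact absurd hfx ha.not_ge
  rw [convexHull_insert hne, mem_convexJoin] at hx
  obtain ⟨a', rfl, y, hy, α, β, hα, hβ, hαβ, rfl⟩ := hx
  have hfy : c ≤ f y := convexHull_subset_halfSpace_ge hs hy
  simp only [map_add, map_smul, smul_eq_mul] at hfx
  have hα0 : α = 0 := by
    by_contra hne
    have hαpos : 0 < α := lt_of_le_of_ne hα (Ne.symm hne)
    have hc : α * c + β * c = c := by rw [← add_mul, hαβ, one_mul]
    nlinarith [mul_pos hαpos (sub_pos.2 ha), mul_nonneg hβ (sub_nonneg.2 hfy)]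
  obtain rfl : β = 1 := by linarith
  simpa [hα0] using hy

end HalfSpace

theorem facet_caps_avoid_below_general {d : ℕ}
    (v : Fin d → EuclideanSpace ℝ (Fin d)) (hv : AffineIndependent ℝ v)
    (w : EuclideanSpace ℝ (Fin d)) (hw : w ≠ 0) (c : ℝ)
    (hvH : ∀ i, ∑ j, w j * v i j = c)
    (u₁ : EuclideanSpace ℝ (Fin d)) (t : ℝ) (ht : 0 < t)
    (hu₁ : u₁ = ((d : ℝ)⁻¹ • ∑ i, v i) + t • w)
    (p₁ : EuclideanSpace ℝ (Fin d)) (hp₁ : ∑ j, w j * p₁ j < c)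
    (C : Fin d → Set (EuclideanSpace ℝ (Fin d)))
    (hC : ∀ i, C i = convexHull ℝ ((v '' {j | j ≠ i}) ∪ {u₁})) :
    (∀ i, p₁ ∉ C i) ∧ (∀ x ∈ ⋂ i, C i, ∑ j, w j * x j > c) := by
  obtain ⟨j₀, -⟩ : ∃ j, w j ≠ 0 := by
    by_contra! h
    exact hw (by ext j; exact h j)
  have : Nonempty (Fin d) := ⟨j₀⟩
  set f := innerₗ (EuclideanSpace ℝ (Fin d)) w
  have hf : ∀ x, ∑ j, w j * x j = f x := fun x => by
    simp [f, PiLp.inner_apply, mul_comm]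
  have hfv : ∀ i, f (v i) = c := fun i => (hf _).symm.trans (hvH i)
  have hfu : c < f u₁ := by
    have hd : (d : ℝ) ≠ 0 := Nat.cast_ne_zero.2 j₀.pos.ne'
    have hww : 0 < f w := real_inner_self_pos.2 hw
    simp only [hu₁, map_add, map_smul, map_sum, hfv, Finset.sum_const, Finset.card_univ,
      Fintype.card_fin, nsmul_eq_mul, smul_eq_mul, inv_mul_cancel_left₀ hd]
    nlinarith
  have hC' : ∀ i, C i = convexHull ℝ (insert u₁ (v '' {i}ᶜ)) := fun i => by
    rw [hC, union_singleton]; rfl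
  have hfv' : ∀ i, ∀ y ∈ v '' {i}ᶜ, c ≤ f y := by
    rintro i _ ⟨j, -, rfl⟩
    exact (hfv j).ge
  refine ⟨fun i hp => ?_, fun x hx => ?_⟩
  · have hp_ge := convexHull_subset_halfSpace_ge (forall_mem_insert.2 ⟨hfu.le, hfv' i⟩) (hC' i ▸ hp)
    exact hp_ge.not_gt (hf p₁ ▸ hp₁)
  · rw [gt_iff_lt, hf, ← not_le]
    intro hxc
    have hx_facets : x ∈ ⋂ i, (affineSpan ℝ (v '' {i}ᶜ) : Set _) := mem_iInter.2 fun i =>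
      convexHull_subset_affineSpan _ <| mem_convexHull_of_mem_convexHull_insert_of_le
        (hfv' i) hfu (hC' i ▸ mem_iInter.1 hx i) hxc
    rwa [hv.iInter_affineSpan_image_compl_singleton_eq_empty] at hx_facets

/-- if `v₁, …, v_d` span a hyperplane `{x | ∑ j, w j * x j = c}`,
`u₁` lies strictly above it on the perpendicular line through the centroid of the
simplex, and `p₁` lies strictly below the hyperplane, then none of the sets
`C i = conv((vertices minus v i) ∪ {u₁})` contains `p₁`, and the intersection of
all the `C i` lies strictly above the hyperplane. -/
theorem facet_caps_avoid_below {d : ℕ} (hd : 1 ≤ d)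
    (v : Fin d → EuclideanSpace ℝ (Fin d)) (hv : AffineIndependent ℝ v)
    (w : EuclideanSpace ℝ (Fin d)) (hw : w ≠ 0) (c : ℝ)
    (hvH : ∀ i, ∑ j, w j * v i j = c)
    (u₁ : EuclideanSpace ℝ (Fin d)) (t : ℝ) (ht : 0 < t)
    (hu₁ : u₁ = ((d : ℝ)⁻¹ • ∑ i, v i) + t • w)
    (p₁ : EuclideanSpace ℝ (Fin d)) (hp₁ : ∑ j, w j * p₁ j < c)
    (C : Fin d → Set (EuclideanSpace ℝ (Fin d)))
    (hC : ∀ i, C i = convexHull ℝ ((v '' {j | j ≠ i}) ∪ {u₁})) :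
    (∀ i, p₁ ∉ C i) ∧ (∀ x ∈ ⋂ i, C i, ∑ j, w j * x j > c) :=
  facet_caps_avoid_below_general v hv w hw c hvH u₁ t ht hu₁ p₁ hp₁ C hC
end

section
/- Let v₁,…,v_d, u₁, u₂ be the lower-bound configuration in ℝ^d (simplex plus two apex points). Suppose p₁ is a convex combination of vertices v₁,…,v_k with all coefficients positive (k ≥ 2), and p₂ is a convex combination of vertices v_{k+1},…,v_{k+k'} with all coefficients positive (k' ≥ 2), for disjoint index sets. Then the convex set A := conv({v₂,…,v_k} ∪ {v_{k+2},…,v_{k+k'}} ∪ {v_{k+k'+1},…,v_d} ∪ {u₁,u₂}) contains exactly d points of the configuration and contains neither p₁ nor p₂. -/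
/-!
Let `w` be normal to the hyperplane through the affinely independent points `v i`. Every point
`∑ b l • v l + s • w` with `∑ b l = 1` has unique coordinates `(b, s)`: pairing with `w` recovers
`s`, and affine independence then recovers `b`. The points with `b i = b j` form a convex set
containing every `v l` with `l ∉ {i, j}` and the whole line through the centroid in direction `w`,
hence the hull `A`. A convex combination of the `v l` whose weights at `i` and `j` differ, such as
`v i`, `v j`, `p₁` or `p₂` (with `i`, `j` the indices of `v₁`, `v_{k+1}`), therefore lies outside `A`.
-/

open RealInnerProductSpace

section NormalDirection

variable {ι E : Type*} [Fintype ι] [NormedAddCommGroup E] [InnerProductSpace ℝ E]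
  {v : ι → E} {w : E} {c : ℝ}

theorem inner_sum_smul_of_sum_eq_one (hvw : ∀ i, ⟪w, v i⟫ = c) {a : ι → ℝ}
    (ha : ∑ i, a i = 1) : ⟪w, ∑ i, a i • v i⟫ = c := by
  simp only [inner_sum, real_inner_smul_right, hvw, ← Finset.sum_mul, ha, one_mul]

theorem sum_inv_card_eq_one [Nonempty ι] : ∑ _i : ι, (Fintype.card ι : ℝ)⁻¹ = 1 := by
  simp [Finset.card_univ]

theorem inner_centroid_add_smul [Nonempty ι] (hvw : ∀ i, ⟪w, v i⟫ = c) (t : ℝ) :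
    ⟪w, (Fintype.card ι : ℝ)⁻¹ • ∑ i, v i + t • w⟫ = c + t * ‖w‖ ^ 2 := by
  rw [inner_add_right, Finset.smul_sum, inner_sum_smul_of_sum_eq_one hvw sum_inv_card_eq_one,
    real_inner_smul_right, real_inner_self_eq_norm_sq]

theorem centroid_add_smul_ne [Nonempty ι] (hvw : ∀ i, ⟪w, v i⟫ = c) (hw : w ≠ 0) {t : ℝ}
    (ht : t ≠ 0) (i : ι) : (Fintype.card ι : ℝ)⁻¹ • ∑ i, v i + t • w ≠ v i := by
  intro h
  have hinner := inner_centroid_add_smul hvw t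
  rw [h, hvw] at hinner
  have : t * ‖w‖ ^ 2 = 0 := by linarith
  simp [ht, hw] at this

theorem eq_and_eq_zero_of_sum_smul_eq_sum_smul_add_smul (hv : AffineIndependent ℝ v)
    (hvw : ∀ i, ⟪w, v i⟫ = c) (hw : w ≠ 0) {a b : ι → ℝ} {s : ℝ} (ha : ∑ i, a i = 1)
    (hb : ∑ i, b i = 1) (h : ∑ i, a i • v i = ∑ i, b i • v i + s • w) : a = b ∧ s = 0 := by
  have hs : s = 0 := by
    have := congrArg (⟪w, ·⟫) h
    simp only [inner_add_right, inner_sum_smul_of_sum_eq_one hvw ha,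
      inner_sum_smul_of_sum_eq_one hvw hb, real_inner_smul_right,
      real_inner_self_eq_norm_sq] at this
    have : s * ‖w‖ ^ 2 = 0 := by linarith
    simpa [hw] using this
  refine ⟨(affineIndependent_iff_eq_of_fintype_affineCombination_eq ℝ v).mp hv a b ha hb ?_, hs⟩
  rw [Finset.univ.affineCombination_eq_linear_combination v a ha,
    Finset.univ.affineCombination_eq_linear_combination v b hb, h, hs, zero_smul, add_zero]

end NormalDirection

section EqualWeightCylinder

variable {ι E : Type*} [Fintype ι] [NormedAddCommGroup E] [InnerProductSpace ℝ E]

def equalWeightCylinder (v : ι → E) (w : E) (i j : ι) : Set E :=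
  {x | ∃ b : ι → ℝ, ∃ s : ℝ, ∑ l, b l = 1 ∧ b i = b j ∧ x = ∑ l, b l • v l + s • w}

variable {v : ι → E} {w : E} {i j : ι}

theorem equalWeightCylinder_comm : equalWeightCylinder v w i j = equalWeightCylinder v w j i :=
  Set.ext fun _ => exists_congr fun _ => exists_congr fun _ =>
    and_congr_right' (and_congr_left' eq_comm)

theorem convex_equalWeightCylinder : Convex ℝ (equalWeightCylinder v w i j) := by
  rintro _ ⟨b, s, hb, hbij, rfl⟩ _ ⟨b', s', hb', hbij', rfl⟩ p q - - hpq
  refine ⟨p • b + q • b', p * s + q * s', ?_, ?_, ?_⟩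
  · simp [Finset.sum_add_distrib, ← Finset.mul_sum, hb, hb', hpq]
  · simp [hbij, hbij']
  · simp only [Pi.add_apply, Pi.smul_apply, smul_eq_mul, add_smul, mul_smul, smul_add,
      Finset.sum_add_distrib, Finset.smul_sum]
    abel

theorem apply_mem_equalWeightCylinder [DecidableEq ι] {l : ι} (hl : l ∉ ({i, j} : Set ι)) :
    v l ∈ equalWeightCylinder v w i j := by
  simp only [Set.mem_insert_iff, Set.mem_singleton_iff, not_or] at hl
  refine ⟨Pi.single l 1, 0, by simp, ?_, by simp⟩
  simp [Ne.symm hl.1, Ne.symm hl.2]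

theorem centroid_add_smul_mem_equalWeightCylinder [Nonempty ι] (t : ℝ) :
    (Fintype.card ι : ℝ)⁻¹ • ∑ l, v l + t • w ∈ equalWeightCylinder v w i j :=
  ⟨_, t, sum_inv_card_eq_one, rfl, by rw [Finset.smul_sum]⟩

theorem convexHull_subset_equalWeightCylinder [Nonempty ι] {U : Set E}
    (hU : ∀ u ∈ U, ∃ t : ℝ, u = (Fintype.card ι : ℝ)⁻¹ • ∑ l, v l + t • w) :
    convexHull ℝ (v '' {i, j}ᶜ ∪ U) ⊆ equalWeightCylinder v w i j := by
  classical
  refine convexHull_min ?_ convex_equalWeightCylinder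
  rintro _ (⟨l, hl, rfl⟩ | hu)
  · exact apply_mem_equalWeightCylinder hl
  · obtain ⟨t, rfl⟩ := hU _ hu
    exact centroid_add_smul_mem_equalWeightCylinder t

variable {c : ℝ}

theorem sum_smul_notMem_equalWeightCylinder (hv : AffineIndependent ℝ v)
    (hvw : ∀ l, ⟪w, v l⟫ = c) (hw : w ≠ 0) {a : ι → ℝ} (ha : ∑ l, a l = 1) (hij : a i ≠ a j) :
    ∑ l, a l • v l ∉ equalWeightCylinder v w i j := by
  rintro ⟨b, s, hb, hbij, h⟩
  obtain ⟨rfl, -⟩ := eq_and_eq_zero_of_sum_smul_eq_sum_smul_add_smul hv hvw hw ha hb h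
  exact hij hbij

theorem finsetSum_smul_notMem_equalWeightCylinder [DecidableEq ι] (hv : AffineIndependent ℝ v)
    (hvw : ∀ l, ⟪w, v l⟫ = c) (hw : w ≠ 0) {s : Finset ι} {a : ι → ℝ}
    (ha : ∑ l ∈ s, a l = 1) (hi : i ∈ s) (hj : j ∉ s) (hai : a i ≠ 0) :
    ∑ l ∈ s, a l • v l ∉ equalWeightCylinder v w i j := by
  have key := sum_smul_notMem_equalWeightCylinder (i := i) (j := j) hv hvw hw
    (a := fun l => if l ∈ s then a l else 0)
    (by rwa [← Finset.sum_filter, Finset.filter_mem_eq_inter, Finset.univ_inter])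
    (by simpa [hi, hj] using hai)
  simpa [ite_smul, ← Finset.sum_filter, Finset.filter_mem_eq_inter] using key

theorem apply_notMem_equalWeightCylinder (hv : AffineIndependent ℝ v)
    (hvw : ∀ l, ⟪w, v l⟫ = c) (hw : w ≠ 0) (hij : i ≠ j) : v i ∉ equalWeightCylinder v w i j := by
  classical
  simpa using finsetSum_smul_notMem_equalWeightCylinder hv hvw hw (s := {i}) (a := 1)
    (by simp) (by simp) (by simpa using hij.symm) one_ne_zero

end EqualWeightCylinder

theorem ncard_insert_insert_range_inter {ι α : Type*} [Finite ι] {v : ι → α} {u₁ u₂ : α}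
    {A : Set α} {T : Set ι} (hv : Function.Injective v) (hu : u₁ ≠ u₂)
    (hu₁ : ∀ i, u₁ ≠ v i) (hu₂ : ∀ i, u₂ ≠ v i) (hu₁A : u₁ ∈ A) (hu₂A : u₂ ∈ A)
    (hvA : ∀ i, v i ∈ A ↔ i ∉ T) :
    (insert u₁ (insert u₂ (Set.range v)) ∩ A).ncard = Tᶜ.ncard + 2 := by
  have hset : insert u₁ (insert u₂ (Set.range v)) ∩ A = insert u₁ (insert u₂ (v '' Tᶜ)) := by
    ext x
    simp only [Set.mem_inter_iff, Set.mem_insert_iff, Set.mem_range, Set.mem_image,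
      Set.mem_compl_iff]
    constructor
    · rintro ⟨rfl | rfl | ⟨i, rfl⟩, hx⟩
      exacts [.inl rfl, .inr (.inl rfl), .inr (.inr ⟨i, (hvA i).mp hx, rfl⟩)]
    · rintro (rfl | rfl | ⟨i, hi, rfl⟩)
      exacts [⟨.inl rfl, hu₁A⟩, ⟨.inr (.inl rfl), hu₂A⟩, ⟨.inr (.inr ⟨i, rfl⟩), (hvA i).mpr hi⟩]
  have hu₂' : u₂ ∉ v '' Tᶜ := fun ⟨i, _, h⟩ => hu₂ i h.symm
  have hu₁' : u₁ ∉ insert u₂ (v '' Tᶜ) := by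
    rintro (h | ⟨i, _, h⟩)
    exacts [hu h, hu₁ i h.symm]
  rw [hset, Set.ncard_insert_of_notMem hu₁', Set.ncard_insert_of_notMem hu₂',
    Set.ncard_image_of_injective _ hv]

theorem avoid_two_combinations_general {d : ℕ}
    (v : Fin d → EuclideanSpace ℝ (Fin d)) (hv : AffineIndependent ℝ v)
    (w : EuclideanSpace ℝ (Fin d)) (hw : w ≠ 0) (c : ℝ)
    (hvH : ∀ i, ∑ j, w j * v i j = c)
    (u₁ u₂ : EuclideanSpace ℝ (Fin d)) (t₁ t₂ : ℝ) (ht₁ : 0 < t₁) (ht₂ : 0 < t₂)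
    (hu₁ : u₁ = ((d : ℝ)⁻¹ • ∑ i, v i) + t₁ • w)
    (hu₂ : u₂ = ((d : ℝ)⁻¹ • ∑ i, v i) - t₂ • w)
    (k k' : ℕ) (hk : 2 ≤ k) (hk' : 2 ≤ k') (hkk' : k + k' ≤ d)
    (p₁ p₂ : EuclideanSpace ℝ (Fin d)) (w₁ w₂ : Fin d → ℝ)
    (hw₁pos : ∀ i ∈ Finset.univ.filter (fun i : Fin d => (i : ℕ) < k), 0 < w₁ i)
    (hw₁sum : ∑ i ∈ Finset.univ.filter (fun i : Fin d => (i : ℕ) < k), w₁ i = 1)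
    (hp₁ : p₁ = ∑ i ∈ Finset.univ.filter (fun i : Fin d => (i : ℕ) < k), w₁ i • v i)
    (hw₂pos : ∀ i ∈ Finset.univ.filter
      (fun i : Fin d => k ≤ (i : ℕ) ∧ (i : ℕ) < k + k'), 0 < w₂ i)
    (hw₂sum : ∑ i ∈ Finset.univ.filter
      (fun i : Fin d => k ≤ (i : ℕ) ∧ (i : ℕ) < k + k'), w₂ i = 1)
    (hp₂ : p₂ = ∑ i ∈ Finset.univ.filter
      (fun i : Fin d => k ≤ (i : ℕ) ∧ (i : ℕ) < k + k'), w₂ i • v i)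
    (A : Set (EuclideanSpace ℝ (Fin d)))
    (hA : A = convexHull ℝ
      ((v '' {i | (i : ℕ) ≠ 0 ∧ (i : ℕ) ≠ k}) ∪ {u₁, u₂})) :
    ((insert u₁ (insert u₂ (Set.range v))) ∩ A).ncard = d ∧ p₁ ∉ A ∧ p₂ ∉ A := by
  have hd : 0 < d := by omega
  have : Nonempty (Fin d) := ⟨⟨0, hd⟩⟩
  set Z : Fin d := ⟨0, hd⟩
  set K : Fin d := ⟨k, by omega⟩
  have hZK : Z ≠ K := by simp [Z, K, Fin.ext_iff]; omega
  have hvw : ∀ i, ⟪w, v i⟫ = c := fun i => by simpa [PiLp.inner_apply, mul_comm] using hvH i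
  have hcard : (d : ℝ) = Fintype.card (Fin d) := by simp
  rw [hcard] at hu₁ hu₂
  rw [sub_eq_add_neg, ← neg_smul] at hu₂
  have hT : {i : Fin d | (i : ℕ) ≠ 0 ∧ (i : ℕ) ≠ k} = {Z, K}ᶜ := by
    ext i; simp [Z, K, Fin.ext_iff]
  rw [hT] at hA
  have hAS : A ⊆ equalWeightCylinder v w Z K := hA ▸ convexHull_subset_equalWeightCylinder
    (by rintro _ (rfl | rfl); exacts [⟨_, hu₁⟩, ⟨_, hu₂⟩])
  have hAS' : A ⊆ equalWeightCylinder v w K Z := by rwa [equalWeightCylinder_comm]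
  have hvZ : v Z ∉ A := fun h => apply_notMem_equalWeightCylinder hv hvw hw hZK (hAS h)
  have hvK : v K ∉ A := fun h => apply_notMem_equalWeightCylinder hv hvw hw hZK.symm (hAS' h)
  have hp₁A : p₁ ∉ A := fun h => finsetSum_smul_notMem_equalWeightCylinder hv hvw hw hw₁sum
    (by simp [Z]; omega) (by simp [K]) (hw₁pos Z (by simp [Z]; omega)).ne' (hp₁ ▸ hAS h)
  have hp₂A : p₂ ∉ A := fun h => finsetSum_smul_notMem_equalWeightCylinder hv hvw hw hw₂sum
    (by simp [K]; omega) (by simp [Z]; omega) (hw₂pos K (by simp [K]; omega)).ne'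
    (hp₂ ▸ hAS' h)
  have hvA : ∀ i, v i ∈ A ↔ i ∉ ({Z, K} : Set (Fin d)) := fun i => by
    refine ⟨fun h hi => ?_, fun hi => hA ▸ subset_convexHull ℝ _ (.inl ⟨i, hi, rfl⟩)⟩
    rcases hi with rfl | rfl
    exacts [hvZ h, hvK h]
  have hu₁₂ : u₁ ≠ u₂ := fun h => by
    rw [hu₁, hu₂, add_right_inj] at h
    have := smul_left_injective ℝ hw h
    linarith
  refine ⟨?_, hp₁A, hp₂A⟩
  rw [ncard_insert_insert_range_inter hv.injective hu₁₂
    (hu₁ ▸ centroid_add_smul_ne hvw hw ht₁.ne')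
    (hu₂ ▸ centroid_add_smul_ne hvw hw (neg_ne_zero.mpr ht₂.ne'))
    (hA ▸ subset_convexHull ℝ _ (.inr (.inl rfl)))
    (hA ▸ subset_convexHull ℝ _ (.inr (.inr rfl))) hvA,
    Set.ncard_compl, Set.ncard_pair hZK, Nat.card_eq_fintype_card, Fintype.card_fin]
  omega

/-- in the simplex-plus-two-apexes configuration, if `p₁` is a
positive convex combination of the first `k ≥ 2` vertices and `p₂` a positive
convex combination of the next `k' ≥ 2` vertices, then the convex hull `A` of all
configuration points except `v₁` and `v_{k+1}` (i.e. the first vertex of each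
group) contains exactly `d` configuration points and contains neither `p₁` nor
`p₂`. -/
theorem avoid_two_combinations {d : ℕ} (hd : 2 ≤ d)
    (v : Fin d → EuclideanSpace ℝ (Fin d)) (hv : AffineIndependent ℝ v)
    (w : EuclideanSpace ℝ (Fin d)) (hw : w ≠ 0) (c : ℝ)
    (hvH : ∀ i, ∑ j, w j * v i j = c)
    (u₁ u₂ : EuclideanSpace ℝ (Fin d)) (t₁ t₂ : ℝ) (ht₁ : 0 < t₁) (ht₂ : 0 < t₂)
    (hu₁ : u₁ = ((d : ℝ)⁻¹ • ∑ i, v i) + t₁ • w)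
    (hu₂ : u₂ = ((d : ℝ)⁻¹ • ∑ i, v i) - t₂ • w)
    (k k' : ℕ) (hk : 2 ≤ k) (hk' : 2 ≤ k') (hkk' : k + k' ≤ d)
    (p₁ p₂ : EuclideanSpace ℝ (Fin d)) (w₁ w₂ : Fin d → ℝ)
    (hw₁pos : ∀ i ∈ Finset.univ.filter (fun i : Fin d => (i : ℕ) < k), 0 < w₁ i)
    (hw₁sum : ∑ i ∈ Finset.univ.filter (fun i : Fin d => (i : ℕ) < k), w₁ i = 1)
    (hp₁ : p₁ = ∑ i ∈ Finset.univ.filter (fun i : Fin d => (i : ℕ) < k), w₁ i • v i)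
    (hw₂pos : ∀ i ∈ Finset.univ.filter
      (fun i : Fin d => k ≤ (i : ℕ) ∧ (i : ℕ) < k + k'), 0 < w₂ i)
    (hw₂sum : ∑ i ∈ Finset.univ.filter
      (fun i : Fin d => k ≤ (i : ℕ) ∧ (i : ℕ) < k + k'), w₂ i = 1)
    (hp₂ : p₂ = ∑ i ∈ Finset.univ.filter
      (fun i : Fin d => k ≤ (i : ℕ) ∧ (i : ℕ) < k + k'), w₂ i • v i)
    (A : Set (EuclideanSpace ℝ (Fin d)))
    (hA : A = convexHull ℝ
      ((v '' {i | (i : ℕ) ≠ 0 ∧ (i : ℕ) ≠ k}) ∪ {u₁, u₂})) :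
    ((insert u₁ (insert u₂ (Set.range v))) ∩ A).ncard = d ∧ p₁ ∉ A ∧ p₂ ∉ A :=
  avoid_two_combinations_general v hv w hw c hvH u₁ u₂ t₁ t₂ ht₁ ht₂ hu₁ hu₂ k k' hk hk' hkk' p₁ p₂
    w₁ w₂ hw₁pos hw₁sum hp₁ hw₂pos hw₂sum hp₂ A hA
end

section
/- Let P be a set of n points in general position in ℝ^d and let 0 < ε₁ ≤ ε₂ < 1 satisfy ε₁ ≥ 3^{d−1}/(2·3^{d−1}+1) and ε₁ + ε₂ ≥ 1. Then there exist two points p₁, p₂ ∈ ℝ^d such that every axis-parallel box containing more than ε₁·n points of P contains at least one of p₁, p₂, and every axis-parallel box containing more than ε₂·n points of P contains both. -/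
/-- `B` is a compact axis-parallel box in `ℝ^d`: a product of closed intervals. -/
def IsBox {d : ℕ} (B : Set (EuclideanSpace ℝ (Fin d))) : Prop :=
  ∃ a b : Fin d → ℝ, B = {x | ∀ i, x i ∈ Set.Icc (a i) (b i)}

/-- General position with respect to axis-parallel boxes: distinct points of `P`
differ in every coordinate. -/
def GeneralPositionBoxes {d : ℕ} (P : Finset (EuclideanSpace ℝ (Fin d))) : Prop :=
  ∀ p ∈ P, ∀ q ∈ P, p ≠ q → ∀ i, p i ≠ q i

/-!
Let `x = ε₁ n`. If `n ≤ 2⌊x⌋ + 1`, two boxes with more than `x` points of `P` share a point of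
`P`; boxes have Helly number 2, so a single point stabs every such box and `p₁ = p₂` works.

Otherwise write `k = ⌊x⌋ + 1` and `n = 2k + μ`. A direction `X` is a coordinate with a sign; let
`E X` be the `k` points of `P` extremal in direction `X` and cut at the innermost of them, so
that only `k - 1` points lie strictly beyond the cut. In coordinate `i`, the net points sit on the
cut of `(i, σ i)` and of `(i, ¬σ i)` respectively. A box missing a net point lies strictly on one
side of a cut, so only boxes avoiding both `E (i, σ i)` and `E (j, ¬σ j)` can be heavy, and this
needs `|E (i, σ i) \ E (j, ¬σ j)| ≤ μ`. Choosing `σ` is thus a 2-colouring of the directions in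
which antipodes differ and `μ`-near directions agree. An obstruction is a closed walk through
at most `2d` directions with an odd number of antipodal steps. Along it `|E X₀ \ E X|` changes
by at most `μ` per step, while antipodal steps send it from near `0` to near `k` and back; this
gives `k ≤ (2d - 1) μ`, which the bound on `ε₁` excludes because `2d - 1 ≤ 3^{d-1}`.
-/

open Finset

namespace SimpleGraph

variable {V : Type*} (G : SimpleGraph (V × Bool))

theorem exists_walk_fst_eq_length_le_card [Fintype V] {u v : V × Bool} (huv : u.1 = v.1)
    (hne : u ≠ v) (h : G.Reachable u v) :
    ∃ u' v' : V × Bool, u'.1 = v'.1 ∧ u' ≠ v' ∧ ∃ p : G.Walk u' v', p.length ≤ Fintype.card V := by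
  classical
  obtain ⟨⟨u₀, v₀⟩, hmem, hmin⟩ :=
    (univ.filter fun w : (V × Bool) × (V × Bool) => w.1.1 = w.2.1 ∧ w.1 ≠ w.2 ∧ G.Reachable w.1 w.2
      ).exists_min_image (fun w => G.dist w.1 w.2) ⟨(u, v), by simp [huv, hne, h]⟩
  obtain ⟨huv₀, hne₀, hreach₀⟩ := by simpa using hmem
  obtain ⟨p, hp⟩ := hreach₀.exists_walk_length_eq_dist
  refine ⟨u₀, v₀, huv₀, hne₀, p, ?_⟩
  -- by minimality of `p`, the vertices it visits before its end lie over distinct points of `V`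
  have hinj : Set.InjOn (fun i => (p.getVert i).1) (range p.length) := by
    intro i hi j hj hij
    by_contra hij'
    wlog hlt : i < j generalizing i j
    · exact this hj hi hij.symm (Ne.symm hij') (by omega)
    simp only [coe_range, Set.mem_Iio] at hi hj
    have hv : p.getVert i ≠ p.getVert j := fun h =>
      hij' ((p.isPath_of_length_eq_dist hp).getVert_injOn (by simp; omega) (by simp; omega) h)
    have hdist : G.dist (p.getVert i) (p.getVert j) ≤ j - i := by
      have := dist_le ((p.drop i).take (j - i))
      simp only [Walk.drop_getVert, Nat.add_sub_cancel' hlt.le, Walk.take_length] at this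
      omega
    have := hmin (p.getVert i, p.getVert j)
      (by simpa [hv] using ⟨hij, (p.take i).reachable.symm.trans (p.take j).reachable⟩)
    dsimp only at this
    omega
  simpa using card_le_card_of_injOn _ (fun _ _ => mem_coe.2 (mem_univ _)) hinj

theorem exists_xor_eq_of_adj (hswap : ∀ u v, G.Adj u v → G.Adj (u.1, !u.2) (v.1, !v.2))
    (hG : ∀ u v, G.Reachable u v → u.1 = v.1 → u = v) :
    ∃ c : V → Bool, ∀ u v, G.Adj u v → xor (c u.1) u.2 = xor (c v.1) v.2 := by
  classical
  let _ : LinearOrder G.ConnectedComponent := IsWellOrder.linearOrder WellOrderingRel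
  let κ := G.connectedComponentMk
  have hκ : ∀ X, κ (X, true) ≠ κ (X, false) := fun X h =>
    Bool.noConfusion (congrArg Prod.snd (hG _ _ (ConnectedComponent.eq.1 h) rfl))
  refine ⟨fun X => decide (κ (X, true) < κ (X, false)), ?_⟩
  -- `xor (c X) b` records whether the lift `(X, b)` lies in the smaller of the two components
  have key : ∀ w : V × Bool, xor (decide (κ (w.1, true) < κ (w.1, false))) w.2 =
      decide (κ (w.1, !w.2) < κ w) := by
    rintro ⟨X, _ | _⟩
    · simp
    · rcases lt_or_gt_of_ne (hκ X) with h | h <;> simp [h, h.not_gt]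
  intro u v huv
  have h₁ : κ u = κ v := ConnectedComponent.eq.2 huv.reachable
  have h₂ : κ (u.1, !u.2) = κ (v.1, !v.2) := ConnectedComponent.eq.2 (hswap u v huv).reachable
  rw [key, key, h₁, h₂]

end SimpleGraph

variable {V : Type*}

/-- The double cover of the signed graph with positive edges `near` and negative edges
`X — ap X`. -/
def coverGraph (near : V → V → Prop) (ap : V → V) : SimpleGraph (V × Bool) :=
  SimpleGraph.fromRel fun u v => (near u.1 v.1 ∧ v.2 = u.2) ∨ (v.1 = ap u.1 ∧ v.2 = !u.2)

namespace coverGraph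

variable {near : V → V → Prop} {ap : V → V}

theorem adj_swap {u v : V × Bool} (h : (coverGraph near ap).Adj u v) :
    (coverGraph near ap).Adj (u.1, !u.2) (v.1, !v.2) := by
  obtain ⟨hne, h⟩ := (SimpleGraph.fromRel_adj _ _ _).1 h
  refine (SimpleGraph.fromRel_adj _ _ _).2 ⟨fun h' => hne ?_, by simpa using h⟩
  simpa [Prod.ext_iff] using h'

theorem adj_iff (hnear : ∀ X Y, near X Y → near Y X) (hap : Function.Involutive ap)
    {u v : V × Bool} : (coverGraph near ap).Adj u v ↔
      u ≠ v ∧ ((near u.1 v.1 ∧ v.2 = u.2) ∨ (v.1 = ap u.1 ∧ v.2 = !u.2)) := by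
  rw [coverGraph, SimpleGraph.fromRel_adj]
  refine and_congr_right fun _ => ⟨?_, Or.inl⟩
  rintro (h | ⟨h₁, h₂⟩ | ⟨h₁, h₂⟩)
  · exact h
  · exact Or.inl ⟨hnear _ _ h₁, h₂.symm⟩
  · exact Or.inr ⟨by rw [h₁, hap], by simp [h₂]⟩

variable {δ : V → V → ℕ} {k μ : ℕ}

theorem bounds_of_walk (hap : Function.Involutive ap) (hsymm : ∀ X Y, δ X Y = δ Y X)
    (htri : ∀ X Y Z, δ X Z ≤ δ X Y + δ Y Z) (hself : ∀ X, δ X X = 0)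
    (hlo : ∀ X Z, k ≤ δ X Z + δ (ap X) Z) (hhi : ∀ X Z, δ X Z + δ (ap X) Z ≤ k + μ)
    {u v : V × Bool} (p : (coverGraph (fun X Y => δ X Y ≤ μ) ap).Walk u v) :
    (u.2 = v.2 → δ u.1 v.1 ≤ p.length * μ) ∧
      (u.2 ≠ v.2 → k + μ ≤ δ u.1 v.1 + p.length * μ) := by
  induction p with
  | nil => simp [hself]
  | @cons u w v h p ih =>
    rw [SimpleGraph.Walk.length_cons, Nat.succ_mul]
    obtain ⟨-, ⟨hδ, hs⟩ | ⟨hX, hs⟩⟩ :=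
      (adj_iff (fun X Y h => (hsymm Y X).trans_le h) hap).1 h
    · refine ⟨fun huv => ?_, fun huv => ?_⟩
      · linarith [ih.1 (hs.trans huv), htri u.1 w.1 v.1]
      · linarith [ih.2 (hs ▸ huv), htri w.1 u.1 v.1, hsymm w.1 u.1]
    · rw [hX] at ih
      refine ⟨fun huv => ?_, fun huv => ?_⟩
      · linarith [ih.2 (by simp [hs, huv]), hhi u.1 v.1]
      · linarith [ih.1 (by cases h : u.2 <;> simp_all), hlo u.1 v.1]

end coverGraph

variable {ι : Type*}

def antipode (X : ι × Bool) : ι × Bool := (X.1, !X.2)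

theorem antipode_involutive : Function.Involutive (antipode (ι := ι)) := fun X => by
  simp [antipode]

theorem exists_choice_lt_of_pseudometric [Fintype ι] {δ : ι × Bool → ι × Bool → ℕ} {k μ : ℕ}
    (hsymm : ∀ X Y, δ X Y = δ Y X) (htri : ∀ X Y Z, δ X Z ≤ δ X Y + δ Y Z)
    (hself : ∀ X, δ X X = 0) (hlo : ∀ X Z, k ≤ δ X Z + δ (antipode X) Z)
    (hhi : ∀ X Z, δ X Z + δ (antipode X) Z ≤ k + μ) (hk : 2 * Fintype.card ι * μ < k + μ) :
    ∃ σ : ι → Bool, ∀ i j, μ < δ (i, σ i) (j, !σ j) := by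
  set G := coverGraph (fun X Y => δ X Y ≤ μ) antipode
  have hadj {u v} := coverGraph.adj_iff (near := fun X Y => δ X Y ≤ μ) (u := u) (v := v)
    (fun X Y h => (hsymm Y X).trans_le h) antipode_involutive
  have hG : ∀ u v, G.Reachable u v → u.1 = v.1 → u = v := by
    intro u v huv h₁
    by_contra hne
    obtain ⟨u', v', h₁', hne', p, hp⟩ := G.exists_walk_fst_eq_length_le_card h₁ hne huv
    have hbound := (coverGraph.bounds_of_walk antipode_involutive hsymm htri hself hlo hhi p).2
      fun h₂ => hne' (Prod.ext h₁' h₂)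
    rw [h₁', hself] at hbound
    have : p.length * μ ≤ 2 * Fintype.card ι * μ :=
      Nat.mul_le_mul_right _ (by simpa [Fintype.card_prod, mul_comm] using hp)
    omega
  obtain ⟨c, hc⟩ := G.exists_xor_eq_of_adj (fun _ _ => coverGraph.adj_swap) hG
  have hc_antipode : ∀ X, c (antipode X) = !c X := fun X => by
    simpa using (hc (X, false) (antipode X, true)
      (hadj.2 ⟨by simp [antipode], Or.inr ⟨rfl, rfl⟩⟩)).symm
  have hc_self : ∀ i, c (i, c (i, true)) = true := fun i => by
    cases h : c (i, true)
    · simpa [antipode, h] using hc_antipode (i, true)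
    · exact h
  refine ⟨fun i => c (i, true), fun i j => ?_⟩
  by_contra! hle
  have hne : ((i, c (i, true)), false) ≠ ((j, !c (j, true)), false) := by
    simp only [ne_eq, Prod.mk.injEq, and_true, not_and]
    rintro rfl
    cases c (i, true) <;> simp
  have := hc _ _ (hadj.2 ⟨hne, Or.inl ⟨hle, rfl⟩⟩)
  have h' := hc_antipode (j, c (j, true))
  simp only [antipode, Bool.xor_false, hc_self] at this h'
  simp [← this] at h'

theorem exists_choice_card_sdiff_union_lt [Fintype ι] {β : Type*} [DecidableEq β]
    {P : Finset β} {E : ι × Bool → Finset β} {k μ : ℕ} (hsub : ∀ X, E X ⊆ P)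
    (hcard : ∀ X, (E X).card = k) (hdisj : ∀ X, Disjoint (E X) (E (antipode X)))
    (hP : P.card = 2 * k + μ) (hk : 2 * Fintype.card ι * μ < k + μ) :
    ∃ σ : ι → Bool, ∀ i j, (P \ (E (i, σ i) ∪ E (j, !σ j))).card < k := by
  have hpair : ∀ X Z, (E X \ E Z).card + (E (antipode X) \ E Z).card =
      ((E X ∪ E (antipode X)) \ E Z).card := fun X Z => by
    rw [union_sdiff_distrib, card_union_of_disjoint ((hdisj X).mono sdiff_subset sdiff_subset)]
  obtain ⟨σ, hσ⟩ := exists_choice_lt_of_pseudometric (δ := fun X Y => (E X \ E Y).card)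
    (fun X Y => card_sdiff_comm ((hcard X).trans (hcard Y).symm))
    (fun X Y Z => (card_le_card (sdiff_triangle _ (E Y) _)).trans (card_union_le _ _))
    (fun X => by simp)
    (fun X Z => by
      have := le_card_sdiff (E Z) (E X ∪ E (antipode X))
      rw [← hpair] at this
      rw [card_union_of_disjoint (hdisj X), hcard, hcard, hcard] at this
      omega)
    (fun X Z => by
      rw [hpair]
      calc _ ≤ (P \ E Z).card :=
            card_le_card (sdiff_subset_sdiff (union_subset (hsub X) (hsub _)) le_rfl)
        _ = k + μ := by rw [card_sdiff_of_subset (hsub Z), hP, hcard]; omega)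
    hk
  refine ⟨σ, fun i j => ?_⟩
  have hμ : μ ≤ 2 * Fintype.card ι * μ :=
    Nat.le_mul_of_pos_left μ (by have := Fintype.card_pos_iff.2 ⟨i⟩; omega)
  have h₁ := card_sdiff_add_card (E (i, σ i)) (E (j, !σ j))
  have h₂ := card_sdiff_of_subset (union_subset (hsub (i, σ i)) (hsub (j, !σ j)))
  have := hσ i j
  rw [h₂, hP, ← h₁, hcard]
  omega

namespace Finset

variable {β α : Type*} [LinearOrder α] {s : Finset β} {f : β → α}

theorem exists_card_filter_lt_eq (hf : Set.InjOn f s) {m : ℕ} (hm : m < s.card) :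
    ∃ x ∈ s, (s.filter fun y => f x < f y).card = m := by
  have hlt : ∀ x ∈ s, ∀ y ∈ s, f x < f y →
      (s.filter fun z => f y < f z).card < (s.filter fun z => f x < f z).card := by
    intro x _ y hy hxy
    refine card_lt_card ⟨fun z hz => ?_, fun h => ?_⟩
    · simp only [mem_filter] at hz ⊢
      exact ⟨hz.1, hxy.trans hz.2⟩
    · exact lt_irrefl _ (mem_filter.1 (h (mem_filter.2 ⟨hy, hxy⟩))).2
  obtain ⟨x, hx, hxm⟩ := surj_on_of_inj_on_of_card_le (t := range s.card)
    (fun x _ => (s.filter fun y => f x < f y).card)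
    (fun x hx => mem_range.2 <|
      card_lt_card ⟨filter_subset _ _, fun h => lt_irrefl (f x) (mem_filter.1 (h hx)).2⟩)
    (fun x y hx hy hxy => by
      rcases lt_trichotomy (f x) (f y) with h | h | h
      · exact absurd hxy (hlt x hx y hy h).ne'
      · exact hf hx hy h
      · exact absurd hxy (hlt y hy x hx h).ne)
    (by simp) m (mem_range.2 hm)
  exact ⟨x, hx, hxm.symm⟩

theorem card_filter_le_eq_card_filter_lt_add_one (hf : Set.InjOn f s) {x : β} (hx : x ∈ s) :
    (s.filter fun y => f x ≤ f y).card = (s.filter fun y => f x < f y).card + 1 := by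
  classical
  rw [← card_insert_of_notMem (s := s.filter fun y => f x < f y) fun h =>
    lt_irrefl _ (mem_filter.1 h).2]
  congr 1
  ext y
  simp only [mem_filter, mem_insert, le_iff_lt_or_eq]
  constructor
  · rintro ⟨hy, h | h⟩
    · exact Or.inr ⟨hy, h⟩
    · exact Or.inl (hf hy hx h.symm)
  · rintro (rfl | ⟨hy, h⟩)
    · exact ⟨hx, Or.inr rfl⟩
    · exact ⟨hy, Or.inl h⟩

theorem disjoint_filter_le_filter_le {a b : α}
    (h : (s.filter fun y => a ≤ f y).card + (s.filter fun y => f y ≤ b).card ≤ s.card) :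
    Disjoint (s.filter fun y => a ≤ f y) (s.filter fun y => f y ≤ b) := by
  classical
  by_contra hnd
  obtain ⟨y, hya, hyb⟩ := not_disjoint_iff.1 hnd
  have hcover : s ⊆ (s.filter fun y => a ≤ f y) ∪ (s.filter fun y => f y ≤ b) := fun z hz => by
    simp only [mem_union, mem_filter]
    by_cases hz' : a ≤ f z
    · exact Or.inl ⟨hz, hz'⟩
    · exact Or.inr ⟨hz, (not_le.1 hz').le.trans ((mem_filter.1 hya).2.trans (mem_filter.1 hyb).2)⟩
  have := card_union_add_card_inter (s.filter fun y => a ≤ f y) (s.filter fun y => f y ≤ b)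
  have := card_le_card hcover
  have := card_pos.2 ⟨y, mem_inter.2 ⟨hya, hyb⟩⟩
  omega

end Finset

def signedCoord (X : ι × Bool) (y : EuclideanSpace ℝ ι) : ℝ := if X.2 then y X.1 else -y X.1

theorem signedCoord_antipode (X : ι × Bool) (y : EuclideanSpace ℝ ι) :
    signedCoord (antipode X) y = -signedCoord X y := by
  cases h : X.2 <;> simp [signedCoord, antipode, h]

theorem injOn_signedCoord {d : ℕ} {P : Finset (EuclideanSpace ℝ (Fin d))}
    (hgp : GeneralPositionBoxes P) (X : Fin d × Bool) : Set.InjOn (signedCoord X) P := by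
  intro y hy z hz h
  by_contra hne
  exact hgp y hy z hz hne X.1 (by cases hX : X.2 <;> simpa [signedCoord, hX] using h)

theorem IsBox.exists_signedCoord_lt {d : ℕ} {B : Set (EuclideanSpace ℝ (Fin d))} (hB : IsBox B)
    {q : EuclideanSpace ℝ (Fin d)} (hq : q ∉ B) :
    ∃ X : Fin d × Bool, ∀ y ∈ B, signedCoord X q < signedCoord X y := by
  obtain ⟨a, b, rfl⟩ := hB
  simp only [Set.mem_ofPred_eq, Set.mem_Icc, not_forall, not_and_or, not_le] at hq
  obtain ⟨i, hi | hi⟩ := hq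
  · exact ⟨(i, true), fun y hy => by simpa [signedCoord] using hi.trans_le (hy i).1⟩
  · exact ⟨(i, false), fun y hy => by simpa [signedCoord] using (hy i).2.trans_lt hi⟩

theorem exists_forall_mem_Icc {α : Type*} (a b : α → ℝ) (h : ∀ s t, a s ≤ b t) :
    ∃ p, ∀ s, p ∈ Set.Icc (a s) (b s) :=
  ⟨⨆ s, a s, fun s => ⟨le_ciSup ⟨b s, Set.forall_mem_range.2 fun t => h t s⟩ s,
    have : Nonempty α := ⟨s⟩; ciSup_le fun t => h t s⟩⟩

theorem IsBox.exists_forall_mem {d : ℕ} {𝒞 : Set (Set (EuclideanSpace ℝ (Fin d)))}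
    (hbox : ∀ B ∈ 𝒞, IsBox B) (hmeet : ∀ B ∈ 𝒞, ∀ B' ∈ 𝒞, (B ∩ B').Nonempty) :
    ∃ p, ∀ B ∈ 𝒞, p ∈ B := by
  choose a b hab using hbox
  have hmem : ∀ B hB z, z ∈ B → ∀ i, z i ∈ Set.Icc (a B hB i) (b B hB i) := fun B hB z hz => by
    rwa [hab B hB] at hz
  have : ∀ i, ∃ t : ℝ, ∀ B : 𝒞, t ∈ Set.Icc (a B B.2 i) (b B B.2 i) := fun i =>
    exists_forall_mem_Icc _ _ fun B B' => by
      obtain ⟨z, hz, hz'⟩ := hmeet B B.2 B' B'.2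
      exact (hmem _ _ z hz i).1.trans (hmem _ _ z hz' i).2
  choose t ht using this
  refine ⟨WithLp.toLp 2 t, fun B hB => ?_⟩
  rw [hab B hB]
  exact fun i => by simpa using ht i ⟨B, hB⟩

section Boxes

open scoped Classical

variable {d : ℕ} (P : Finset (EuclideanSpace ℝ (Fin d)))

theorem ptsIn_eq_card_filter (C : Set (EuclideanSpace ℝ (Fin d))) :
    ptsIn P C = (P.filter (· ∈ C)).card := by
  rw [ptsIn, ← Set.ncard_coe_finset]
  congr 1
  ext
  simp

theorem inter_nonempty_of_card_lt_ptsIn_add {B B' : Set (EuclideanSpace ℝ (Fin d))}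
    (h : P.card < ptsIn P B + ptsIn P B') : (B ∩ B').Nonempty := by
  rw [ptsIn_eq_card_filter, ptsIn_eq_card_filter] at h
  obtain ⟨z, hz⟩ :=
    inter_nonempty_of_card_lt_card_add_card (filter_subset _ _) (filter_subset _ _) h
  simp only [mem_inter, mem_filter] at hz
  exact ⟨z, hz.1.2, hz.2.2⟩

theorem exists_forall_mem_of_lt_ptsIn {x : ℝ} (hx : 0 ≤ x) (hP : P.card ≤ 2 * ⌊x⌋₊ + 1) :
    ∃ p, ∀ B, IsBox B → x < ptsIn P B → p ∈ B := by
  have hfloor {B} (h : x < ptsIn P B) : ⌊x⌋₊ < ptsIn P B := (Nat.floor_lt hx).2 h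
  obtain ⟨p, hp⟩ := IsBox.exists_forall_mem (𝒞 := {B | IsBox B ∧ x < ptsIn P B})
    (fun B hB => hB.1) fun B hB B' hB' =>
      inter_nonempty_of_card_lt_ptsIn_add P (by have := hfloor hB.2; have := hfloor hB'.2; omega)
  exact ⟨p, fun B hB h => hp B ⟨hB, h⟩⟩

variable (pivot : Fin d × Bool → EuclideanSpace ℝ (Fin d))

noncomputable def atOrBeyond (X : Fin d × Bool) : Finset (EuclideanSpace ℝ (Fin d)) :=
  P.filter fun y => signedCoord X (pivot X) ≤ signedCoord X y

noncomputable def beyond (X : Fin d × Bool) : Finset (EuclideanSpace ℝ (Fin d)) :=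
  P.filter fun y => signedCoord X (pivot X) < signedCoord X y

def netPoint (σ : Fin d → Bool) : EuclideanSpace ℝ (Fin d) :=
  WithLp.toLp 2 fun i => pivot (i, σ i) i

theorem filter_mem_subset_of_netPoint_notMem {B : Set (EuclideanSpace ℝ (Fin d))} (hB : IsBox B)
    {σ : Fin d → Bool} (hp : netPoint pivot σ ∉ B) :
    ∃ i, P.filter (· ∈ B) ⊆ beyond P pivot (i, σ i) ∨
      P.filter (· ∈ B) ⊆ P \ atOrBeyond P pivot (i, σ i) := by
  obtain ⟨⟨i, s⟩, hX⟩ := hB.exists_signedCoord_lt hp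
  have hcoord : ∀ s', signedCoord (i, s') (netPoint pivot σ) =
      signedCoord (i, s') (pivot (i, σ i)) := fun s' => by
    simp [signedCoord, netPoint]
  refine ⟨i, ?_⟩
  rcases Bool.eq_or_eq_not s (σ i) with rfl | rfl
  · refine Or.inl fun y hy => ?_
    rw [mem_filter] at hy
    exact mem_filter.2 ⟨hy.1, (hcoord _).symm.trans_lt (hX y hy.2)⟩
  · refine Or.inr fun y hy => ?_
    rw [mem_filter] at hy
    have := hX y hy.2
    rw [hcoord] at this
    simp only [show (i, !σ i) = antipode (i, σ i) from rfl, signedCoord_antipode,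
      neg_lt_neg_iff] at this
    simp [atOrBeyond, hy.1, this]

variable {pivot} {K : ℕ}

theorem ptsIn_le_of_netPoint_notMem (hbeyond : ∀ X, (beyond P pivot X).card ≤ K)
    (hout : ∀ X, (P \ atOrBeyond P pivot X).card ≤ K)
    {B : Set (EuclideanSpace ℝ (Fin d))} (hB : IsBox B) {σ : Fin d → Bool}
    (hp : netPoint pivot σ ∉ B) : ptsIn P B ≤ K := by
  rw [ptsIn_eq_card_filter]
  obtain ⟨i, h | h⟩ := filter_mem_subset_of_netPoint_notMem P pivot hB hp
  · exact (card_le_card h).trans (hbeyond _)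
  · exact (card_le_card h).trans (hout _)

theorem ptsIn_le_of_netPoints_notMem (hbeyond : ∀ X, (beyond P pivot X).card ≤ K)
    {σ : Fin d → Bool}
    (hσ : ∀ i j, (P \ (atOrBeyond P pivot (i, σ i) ∪ atOrBeyond P pivot (j, !σ j))).card ≤ K)
    {B : Set (EuclideanSpace ℝ (Fin d))} (hB : IsBox B) (h₁ : netPoint pivot σ ∉ B)
    (h₂ : netPoint pivot (fun i => !σ i) ∉ B) : ptsIn P B ≤ K := by
  rw [ptsIn_eq_card_filter]
  obtain ⟨i, hi | hi⟩ := filter_mem_subset_of_netPoint_notMem P pivot hB h₁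
  · exact (card_le_card hi).trans (hbeyond _)
  obtain ⟨j, hj | hj⟩ := filter_mem_subset_of_netPoint_notMem P pivot hB h₂
  · exact (card_le_card hj).trans (hbeyond _)
  refine (card_le_card fun y hy => ?_).trans (hσ i j)
  have := hi hy
  have := hj hy
  simp_all

end Boxes

theorem exists_pair_ptsIn_le_of_notMem {d : ℕ} {P : Finset (EuclideanSpace ℝ (Fin d))}
    (hgp : GeneralPositionBoxes P) {k μ : ℕ} (hk : 0 < k) (hP : P.card = 2 * k + μ)
    (hμ : 2 * d * μ < k + μ) :
    ∃ p₁ p₂ : EuclideanSpace ℝ (Fin d),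
      (∀ B, IsBox B → p₁ ∉ B → p₂ ∉ B → ptsIn P B ≤ k - 1) ∧
      (∀ B, IsBox B → (p₁ ∉ B ∨ p₂ ∉ B) → ptsIn P B ≤ k + μ) := by
  choose pivot hmem hbeyond using fun X : Fin d × Bool =>
    exists_card_filter_lt_eq (injOn_signedCoord hgp X) (show k - 1 < P.card by omega)
  have hcard : ∀ X, (atOrBeyond P pivot X).card = k := fun X => by
    rw [atOrBeyond, card_filter_le_eq_card_filter_lt_add_one (injOn_signedCoord hgp X) (hmem X),
      hbeyond X]
    omega
  have hdisj : ∀ X, Disjoint (atOrBeyond P pivot X) (atOrBeyond P pivot (antipode X)) := by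
    intro X
    have hanti : atOrBeyond P pivot (antipode X) =
        P.filter fun y => signedCoord X y ≤ signedCoord X (pivot (antipode X)) := by
      simp [atOrBeyond, signedCoord_antipode]
    have hX := hcard X
    have hX' := hcard (antipode X)
    rw [atOrBeyond] at hX
    rw [hanti] at hX' ⊢
    exact disjoint_filter_le_filter_le (by rw [hX, hX']; omega)
  obtain ⟨σ, hσ⟩ := exists_choice_card_sdiff_union_lt (fun X => filter_subset _ _) hcard hdisj hP
    (by simpa using hμ)
  refine ⟨netPoint pivot σ, netPoint pivot (fun i => !σ i), fun B hB h₁ h₂ => ?_, fun B hB h => ?_⟩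
  · exact ptsIn_le_of_netPoints_notMem P (fun X => (hbeyond X).le)
      (fun i j => Nat.le_sub_one_of_lt (hσ i j)) hB h₁ h₂
  · have hout : ∀ X, (P \ atOrBeyond P pivot X).card ≤ k + μ := fun X => by
      rw [card_sdiff_of_subset (show atOrBeyond P pivot X ⊆ P from filter_subset _ _), hcard, hP]
      omega
    have hbeyond' : ∀ X, (beyond P pivot X).card ≤ k + μ := fun X => by
      rw [beyond, hbeyond X]
      omega
    rcases h with h | h <;> exact ptsIn_le_of_netPoint_notMem P hbeyond' hout hB h

theorem two_mul_mul_lt_of_ge_div {d k μ n : ℕ} {ε : ℝ}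
    (hlow : ε ≥ (3 : ℝ) ^ (d - 1) / (2 * (3 : ℝ) ^ (d - 1) + 1)) (hn : n = 2 * k + μ)
    (hk : ε * n < k) : 2 * d * μ < k + μ := by
  set m : ℝ := 3 ^ (d - 1)
  have hm : 0 ≤ m := by positivity
  have hdm : (2 * d : ℝ) ≤ m + 1 := by
    rcases d with _ | d
    · simp [m]
    · have := one_add_mul_le_pow (show (-2 : ℝ) ≤ 2 by norm_num) d
      norm_num [m] at this ⊢
      linarith
  have hmn : m * (n - 2 * (ε * n)) ≤ ε * n := by
    rw [ge_iff_le, div_le_iff₀ (by positivity)] at hlow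
    linarith [mul_le_mul_of_nonneg_right hlow (Nat.cast_nonneg n)]
  have hμ : (μ : ℝ) ≤ n - 2 * (ε * n) := by
    have : (n : ℝ) = 2 * k + μ := by exact_mod_cast hn
    linarith
  have h₁ := mul_le_mul_of_nonneg_right hdm (Nat.cast_nonneg μ)
  have h₂ := mul_le_mul_of_nonneg_left hμ hm
  exact_mod_cast (show ((2 * d * μ : ℕ) : ℝ) < k + μ by push_cast; linarith)

theorem weighted_net_boxes_general {d : ℕ} (P : Finset (EuclideanSpace ℝ (Fin d)))
    (n : ℕ) (hn : P.card = n) (hgp : GeneralPositionBoxes P)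
    (ε₁ ε₂ : ℝ) (hε₁ : 0 < ε₁) (hε₁₂ : ε₁ ≤ ε₂)
    (hlow : ε₁ ≥ (3 : ℝ) ^ (d - 1) / (2 * (3 : ℝ) ^ (d - 1) + 1))
    (hsum : ε₁ + ε₂ ≥ 1) :
    ∃ p₁ p₂ : EuclideanSpace ℝ (Fin d),
      (∀ B : Set (EuclideanSpace ℝ (Fin d)), IsBox B →
        (ptsIn P B : ℝ) > ε₁ * n → p₁ ∈ B ∨ p₂ ∈ B) ∧
      (∀ B : Set (EuclideanSpace ℝ (Fin d)), IsBox B →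
        (ptsIn P B : ℝ) > ε₂ * n → p₁ ∈ B ∧ p₂ ∈ B) := by
  have hx : 0 ≤ ε₁ * n := mul_nonneg hε₁.le n.cast_nonneg
  have h₁₂ : ε₁ * n ≤ ε₂ * n := by gcongr
  rcases le_or_gt n (2 * ⌊ε₁ * n⌋₊ + 1) with hsmall | hlarge
  · obtain ⟨p, hp⟩ := exists_forall_mem_of_lt_ptsIn P hx (hn ▸ hsmall)
    exact ⟨p, p, fun B hB h => Or.inl (hp B hB h),
      fun B hB h => ⟨hp B hB (h₁₂.trans_lt h), hp B hB (h₁₂.trans_lt h)⟩⟩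
  obtain ⟨μ, hμ⟩ := Nat.exists_eq_add_of_le (show 2 * (⌊ε₁ * n⌋₊ + 1) ≤ n by omega)
  have hfloor := Nat.lt_floor_add_one (ε₁ * n)
  obtain ⟨p₁, p₂, hboth, hone⟩ := exists_pair_ptsIn_le_of_notMem hgp (Nat.add_one_pos _)
    (hn.trans hμ) (two_mul_mul_lt_of_ge_div hlow hμ (by exact_mod_cast hfloor))
  refine ⟨p₁, p₂, fun B hB h => ?_, fun B hB h => ?_⟩
  · by_contra! hout
    have := (Nat.cast_le (α := ℝ)).2 (hboth B hB hout.1 hout.2)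
    rw [Nat.add_sub_cancel] at this
    linarith [Nat.floor_le hx]
  · by_contra hout
    have := (Nat.cast_le (α := ℝ)).2 (hone B hB (not_and_or.1 hout))
    have hn' : (n : ℝ) = 2 * (⌊ε₁ * n⌋₊ + 1) + μ := by exact_mod_cast hμ
    push_cast at this
    linarith [mul_le_mul_of_nonneg_right hsum (Nat.cast_nonneg n)]

/-- weighted ε-nets of size 2 for axis-parallel boxes in `ℝ^d`,
provided `ε₁ ≥ 3^{d-1}/(2·3^{d-1}+1)` and `ε₁ + ε₂ ≥ 1`. -/
theorem weighted_net_boxes {d : ℕ} (P : Finset (EuclideanSpace ℝ (Fin d)))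
    (n : ℕ) (hn : P.card = n) (hgp : GeneralPositionBoxes P)
    (ε₁ ε₂ : ℝ) (hε₁ : 0 < ε₁) (hε₁₂ : ε₁ ≤ ε₂) (hε₂ : ε₂ < 1)
    (hlow : ε₁ ≥ (3 : ℝ) ^ (d - 1) / (2 * (3 : ℝ) ^ (d - 1) + 1))
    (hsum : ε₁ + ε₂ ≥ 1) :
    ∃ p₁ p₂ : EuclideanSpace ℝ (Fin d),
      (∀ B : Set (EuclideanSpace ℝ (Fin d)), IsBox B →
        (ptsIn P B : ℝ) > ε₁ * n → p₁ ∈ B ∨ p₂ ∈ B) ∧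
      (∀ B : Set (EuclideanSpace ℝ (Fin d)), IsBox B →
        (ptsIn P B : ℝ) > ε₂ * n → p₁ ∈ B ∧ p₂ ∈ B) :=
  weighted_net_boxes_general P n hn hgp ε₁ ε₂ hε₁ hε₁₂ hlow hsum
end
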